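/- arXiv:math/0304217 — 8 statements merged into one kernel-verified Lean document; each statement's English description precedes it below -/
import Mathlib

section
/- There exist absolute constants ε > 0 and c > 0 such that for every prime q and every nonempty subset A of F = ℤ/qℤ with |A| < |F|^{1/2}, one has max(|A+A|, |A·A|) ≥ c·|A|^{1+ε}. -/
open scoped Pointwise

open Finset


namespace SPE
variable {q : ℕ} [Fact q.Prime]

theorem card_dil {x : ZMod q} (hx : x ≠ 0) (A : Finset (ZMod q)) : #(x • A) = #A := by
  rw [show x • A = (Units.mk0 x hx) • A by ext y; simp [Finset.mem_smul_finset, Units.smul_def]]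
  exact card_smul_finset _ _

theorem dil_add (x : ZMod q) (A B : Finset (ZMod q)) : x • (A + B) = x • A + x • B := by
  ext y
  simp only [Finset.mem_smul_finset, Finset.mem_add, smul_eq_mul]
  constructor
  · rintro ⟨z, ⟨a, ha, b, hb, rfl⟩, rfl⟩
    exact ⟨x*a, ⟨a, ha, rfl⟩, x*b, ⟨b, hb, rfl⟩, (mul_add x a b).symm⟩
  · rintro ⟨u, ⟨a, ha, rfl⟩, v, ⟨b, hb, rfl⟩, rfl⟩
    exact ⟨a + b, ⟨a, ha, b, hb, rfl⟩, mul_add x a b⟩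

theorem dil_dil (x y : ZMod q) (A : Finset (ZMod q)) : x • (y • A) = (x*y) • A := by
  ext z
  simp only [Finset.mem_smul_finset, smul_eq_mul]
  constructor
  · rintro ⟨w, ⟨a, ha, rfl⟩, rfl⟩; exact ⟨a, ha, mul_assoc x y a⟩
  · rintro ⟨a, ha, rfl⟩; exact ⟨y*a, ⟨a, ha, rfl⟩, (mul_assoc x y a).symm⟩

theorem one_dil (A : Finset (ZMod q)) : (1 : ZMod q) • A = A := by
  ext z; simp [Finset.mem_smul_finset]

theorem zero_dil {A : Finset (ZMod q)} (hA : A.Nonempty) : (0 : ZMod q) • A = {0} := by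
  ext z
  simp only [Finset.mem_smul_finset, smul_eq_mul, zero_mul, Finset.mem_singleton]
  constructor
  · rintro ⟨a, _, rfl⟩; rfl
  · rintro rfl; exact ⟨hA.choose, hA.choose_spec, rfl⟩

theorem add_dil_subset (x y : ZMod q) (A : Finset (ZMod q)) :
    (x + y) • A ⊆ x • A + y • A := by
  intro z hz
  rw [Finset.mem_smul_finset] at hz
  obtain ⟨a, ha, rfl⟩ := hz
  rw [Finset.mem_add]
  exact ⟨x*a, Finset.smul_mem_smul_finset ha, y*a, Finset.smul_mem_smul_finset ha,
    (add_mul x y a).symm⟩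

theorem sub_dil (x : ZMod q) (A B : Finset (ZMod q)) : A - x • B = A + (-x) • B := by
  ext z
  simp only [Finset.mem_sub, Finset.mem_add, Finset.mem_smul_finset, smul_eq_mul]
  constructor
  · rintro ⟨a, ha, w, ⟨b, hb, rfl⟩, rfl⟩
    exact ⟨a, ha, -x*b, ⟨b, hb, rfl⟩, by ring⟩
  · rintro ⟨a, ha, w, ⟨b, hb, rfl⟩, rfl⟩
    exact ⟨a, ha, x*b, ⟨b, hb, rfl⟩, by ring⟩

theorem add_zero_dil (A : Finset (ZMod q)) : A + ({0} : Finset (ZMod q)) = A := by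
  ext z; simp [Finset.mem_add]


-- test abel on pointwise finsets
example (A B C : Finset (ZMod q)) : A + B + C = B + (A + C) := by abel

def tau (A : Finset (ZMod q)) (x : ZMod q) : ℕ := #(A + x • A)

variable {A : Finset (ZMod q)}

theorem tau_zero (hA : A.Nonempty) : tau A 0 = #A := by
  rw [tau, zero_dil hA, add_zero_dil]

theorem tau_one : tau A 1 = #(A + A) := by rw [tau, one_dil]

theorem plu (k : ℕ) (hA : A.Nonempty) : #(k • A) * #A ^ (k-1) ≤ #(A + A) ^ k := by
  have h := pluennecke_ruzsa_inequality_nsmul_add hA A k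
  have hA0 : (0:ℚ≥0) < #A := by exact_mod_cast hA.card_pos
  rcases Nat.eq_zero_or_pos k with rfl | hk
  · simpa using h
  have hpow : ((#A : ℚ≥0)) * #A ^ (k-1) = #A ^ k := by
    rw [← pow_succ']; congr 1; omega
  have h2 : (#(k • A) * #A ^ (k-1) : ℚ≥0) ≤ #(A + A) ^ k := by
    calc (#(k • A) * #A ^ (k-1) : ℚ≥0)
        ≤ ((#(A + A) / #A : ℚ≥0)) ^ k * #A * #A ^ (k-1) := mul_le_mul_left h _
      _ = #(A + A) ^ k / #A ^ k * (#A * #A ^ (k-1)) := by rw [div_pow]; ring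
      _ = #(A + A) ^ k / #A ^ k * #A ^ k := by rw [hpow]
      _ = #(A + A) ^ k := by field_simp
  exact_mod_cast h2

theorem three_nsmul_eq : (3 : ℕ) • A = A + A + A := by
  rw [show (3:ℕ) = 2 + 1 from rfl, succ_nsmul, two_nsmul]

theorem four_nsmul_eq : (4 : ℕ) • A = A + A + A + A := by
  rw [show (4:ℕ) = 3 + 1 from rfl, succ_nsmul, three_nsmul_eq]

theorem P3 (hA : A.Nonempty) : #(A + A + A) * #A ^ 2 ≤ #(A + A) ^ 3 := by
  simpa [three_nsmul_eq] using plu 3 hA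

theorem P4 (hA : A.Nonempty) : #(A + A + A + A) * #A ^ 3 ≤ #(A + A) ^ 4 := by
  simpa [four_nsmul_eq] using plu 4 hA

end SPE

namespace SPE
variable {q : ℕ} [Fact q.Prime] {A : Finset (ZMod q)}

theorem R0 (x y : ZMod q) : #(x • A + y • A) * #A ≤ tau A x * tau A y := by
  have h1 := ruzsa_triangle_inequality_add_add_add (x•A) A (y•A)
  rw [add_comm (x•A) A] at h1
  exact h1

theorem tau_neg (x : ZMod q) : tau A (-x) * #A ≤ #(A + A) * tau A x := by
  have h := ruzsa_triangle_inequality_sub_add_add A A (x • A)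
  rw [show A - x•A = A + (-x) • A from sub_dil x A A, add_comm (x•A) A] at h
  exact h

theorem C2 (x y : ZMod q) :
    #(A + x • A + y • A) * (#A * #A) ≤ tau A x * tau A y * #(A + A + A) := by
  have h1 := ruzsa_triangle_inequality_add_add_add (x•A) A (A + y•A)
  rw [show x•A + (A + y•A) = A + x•A + y•A by abel, add_comm (x•A) A,
    show A + (A + y•A) = A + A + y•A by abel] at h1
  have h2 := ruzsa_triangle_inequality_add_add_add (y•A) A (A + A)
  rw [show y•A + (A + A) = A + A + y•A by abel, add_comm (y•A) A,
    show A + (A + A) = A + A + A by abel] at h2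
  calc #(A + x • A + y • A) * (#A * #A) = #(A + x • A + y • A) * #A * #A := by ring
    _ ≤ tau A x * #(A + A + y•A) * #A := Nat.mul_le_mul_right _ h1
    _ = tau A x * (#(A + A + y•A) * #A) := by ring
    _ ≤ tau A x * (tau A y * #(A + A + A)) := Nat.mul_le_mul_left _ h2
    _ = tau A x * tau A y * #(A + A + A) := by ring

theorem C3 (w x y z : ZMod q) :
    #(w • A + x • A + y • A + z • A) * (#A * #A * #A * #A) ≤
      tau A w * tau A x * tau A y * tau A z * #(A + A + A + A) := by
  have h0 := ruzsa_triangle_inequality_add_add_add (w•A) A (x•A + y•A + z•A)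
  rw [show w•A + (x•A + y•A + z•A) = w•A + x•A + y•A + z•A by abel, add_comm (w•A) A,
    show A + (x•A + y•A + z•A) = A + x•A + y•A + z•A by abel] at h0
  have h1 := ruzsa_triangle_inequality_add_add_add (x•A) A (A + y•A + z•A)
  rw [show x•A + (A + y•A + z•A) = A + x•A + y•A + z•A by abel, add_comm (x•A) A,
    show A + (A + y•A + z•A) = A + A + y•A + z•A by abel] at h1
  have h2 := ruzsa_triangle_inequality_add_add_add (y•A) A (A + A + z•A)
  rw [show y•A + (A + A + z•A) = A + A + y•A + z•A by abel, add_comm (y•A) A,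
    show A + (A + A + z•A) = A + A + A + z•A by abel] at h2
  have h3 := ruzsa_triangle_inequality_add_add_add (z•A) A (A + A + A)
  rw [show z•A + (A + A + A) = A + A + A + z•A by abel, add_comm (z•A) A,
    show A + (A + A + A) = A + A + A + A by abel] at h3
  calc #(w • A + x • A + y • A + z • A) * (#A * #A * #A * #A)
      = #(w • A + x • A + y • A + z • A) * #A * (#A * #A * #A) := by ring
    _ ≤ tau A w * #(A + x•A + y•A + z•A) * (#A * #A * #A) := Nat.mul_le_mul_right _ h0
    _ = tau A w * (#(A + x•A + y•A + z•A) * #A) * (#A * #A) := by ring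
    _ ≤ tau A w * (tau A x * #(A + A + y•A + z•A)) * (#A * #A) := by
        exact Nat.mul_le_mul_right _ (Nat.mul_le_mul_left _ h1)
    _ = tau A w * tau A x * (#(A + A + y•A + z•A) * #A) * #A := by ring
    _ ≤ tau A w * tau A x * (tau A y * #(A + A + A + z•A)) * #A := by
        exact Nat.mul_le_mul_right _ (Nat.mul_le_mul_left _ h2)
    _ = tau A w * tau A x * tau A y * (#(A + A + A + z•A) * #A) := by ring
    _ ≤ tau A w * tau A x * tau A y * (tau A z * #(A + A + A + A)) :=
        Nat.mul_le_mul_left _ h3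
    _ = tau A w * tau A x * tau A y * tau A z * #(A + A + A + A) := by ring

end SPE

namespace SPE
variable {q : ℕ} [Fact q.Prime] {A : Finset (ZMod q)} {M : ℕ}

/-- Ratio of differences of tame elements is tame. -/
theorem tau_ratio (hA : A.Nonempty) (hMa : #(A + A) ≤ M) (hnM : #A ≤ M)
    (x1 x2 x3 x4 d : ZMod q) (hu : x3 - x4 ≠ 0) (hd : (x3 - x4) * d = x1 - x2)
    (ht1 : tau A x1 * #A ^ 3 ≤ 2 * M ^ 4) (ht2 : tau A x2 * #A ^ 3 ≤ 2 * M ^ 4)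
    (ht3 : tau A x3 * #A ^ 3 ≤ 2 * M ^ 4) (ht4 : tau A x4 * #A ^ 3 ≤ 2 * M ^ 4) :
    tau A d * #A ^ 21 ≤ 16 * M ^ 22 := by
  set n := #A with hn
  -- τ d = #((x3-x4)•A + (x1-x2)•A)
  have e1 : tau A d = #((x3 - x4) • A + (x1 - x2) • A) := by
    rw [tau, ← card_dil hu (A + d • A), dil_add, dil_dil, hd]
  -- subset into 4-fold dilate sum
  have s3 : (x3 - x4) • A ⊆ x3 • A + (-x4) • A := by
    have := add_dil_subset x3 (-x4) A
    rwa [show x3 + -x4 = x3 - x4 by ring] at this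
  have s1 : (x1 - x2) • A ⊆ x1 • A + (-x2) • A := by
    have := add_dil_subset x1 (-x2) A
    rwa [show x1 + -x2 = x1 - x2 by ring] at this
  have hF : tau A d ≤ #(x3 • A + (-x4) • A + x1 • A + (-x2) • A) := by
    rw [e1]
    refine card_le_card ?_
    refine (Finset.add_subset_add s3 s1).trans ?_
    rw [show x3 • A + (-x4) • A + (x1 • A + (-x2) • A)
        = x3 • A + (-x4) • A + x1 • A + (-x2) • A by abel]
  have hmain := C3 (A := A) x3 (-x4) x1 (-x2)
  -- neg taus
  have h4 : tau A (-x4) * (n*n*n*n) ≤ 2 * M ^ 5 := by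
    calc tau A (-x4) * (n*n*n*n) = (tau A (-x4) * n) * (n*n*n) := by ring
      _ ≤ (#(A + A) * tau A x4) * (n*n*n) := Nat.mul_le_mul_right _ (tau_neg x4)
      _ = #(A + A) * (tau A x4 * (n*n*n)) := by ring
      _ ≤ M * (2 * M ^ 4) := by
          refine Nat.mul_le_mul hMa ?_
          calc tau A x4 * (n*n*n) = tau A x4 * n ^ 3 := by ring
            _ ≤ 2 * M ^ 4 := ht4
      _ = 2 * M ^ 5 := by ring
  have h2 : tau A (-x2) * (n*n*n*n) ≤ 2 * M ^ 5 := by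
    calc tau A (-x2) * (n*n*n*n) = (tau A (-x2) * n) * (n*n*n) := by ring
      _ ≤ (#(A + A) * tau A x2) * (n*n*n) := Nat.mul_le_mul_right _ (tau_neg x2)
      _ = #(A + A) * (tau A x2 * (n*n*n)) := by ring
      _ ≤ M * (2 * M ^ 4) := by
          refine Nat.mul_le_mul hMa ?_
          calc tau A x2 * (n*n*n) = tau A x2 * n ^ 3 := by ring
            _ ≤ 2 * M ^ 4 := ht2
      _ = 2 * M ^ 5 := by ring
  have hQ : #(A + A + A + A) * (n*n*n) ≤ M ^ 4 := by
    calc #(A + A + A + A) * (n*n*n) = #(A + A + A + A) * n ^ 3 := by ring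
      _ ≤ #(A + A) ^ 4 := P4 hA
      _ ≤ M ^ 4 := Nat.pow_le_pow_left hMa 4
  have ht1' : tau A x1 * (n*n*n) ≤ 2 * M ^ 4 := by
    calc tau A x1 * (n*n*n) = tau A x1 * n ^ 3 := by ring
      _ ≤ 2 * M ^ 4 := ht1
  have ht3' : tau A x3 * (n*n*n) ≤ 2 * M ^ 4 := by
    calc tau A x3 * (n*n*n) = tau A x3 * n ^ 3 := by ring
      _ ≤ 2 * M ^ 4 := ht3
  calc tau A d * n ^ 21 ≤ #(x3 • A + (-x4) • A + x1 • A + (-x2) • A) * n ^ 21 :=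
        Nat.mul_le_mul_right _ hF
    _ = #(x3 • A + (-x4) • A + x1 • A + (-x2) • A) * (n*n*n*n) * n ^ 17 := by ring
    _ ≤ tau A x3 * tau A (-x4) * tau A x1 * tau A (-x2) * #(A + A + A + A) * n ^ 17 :=
        Nat.mul_le_mul_right _ hmain
    _ = (tau A x3 * (n*n*n)) * ((tau A (-x4) * (n*n*n*n)) * ((tau A x1 * (n*n*n)) *
        ((tau A (-x2) * (n*n*n*n)) * (#(A + A + A + A) * (n*n*n))))) := by ring
    _ ≤ (2 * M ^ 4) * ((2 * M ^ 5) * ((2 * M ^ 4) * ((2 * M ^ 5) * (M ^ 4)))) := by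
        exact Nat.mul_le_mul ht3' (Nat.mul_le_mul h4 (Nat.mul_le_mul ht1'
          (Nat.mul_le_mul h2 hQ)))
    _ = 16 * M ^ 22 := by ring

/-- `d+1` is tame if `d` is. -/
theorem tau_succ (hA : A.Nonempty) (hMa : #(A + A) ≤ M) (d : ZMod q) :
    tau A (d + 1) * #A ^ 3 ≤ tau A d * M ^ 3 := by
  set n := #A
  have hsub : tau A (d+1) ≤ #(d • A + (A + A)) := by
    rw [tau]
    refine card_le_card ?_
    have hsub1 : (d+1) • A ⊆ d • A + A := (add_dil_subset d 1 A).trans (by rw [one_dil])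
    refine (Finset.add_subset_add_left hsub1).trans ?_
    rw [show A + (d • A + A) = d • A + (A + A) by abel]
  have h1 := ruzsa_triangle_inequality_add_add_add (d • A) A (A + A)
  rw [add_comm (d • A) A, show A + (A + A) = A + A + A by abel] at h1
  have h2 : #(A + A + A) * n ^ 2 ≤ M ^ 3 :=
    (P3 hA).trans (Nat.pow_le_pow_left hMa 3)
  calc tau A (d+1) * n ^ 3 = (tau A (d+1) * n) * n ^ 2 := by ring
    _ ≤ (#(d • A + (A + A)) * n) * n ^ 2 :=
        Nat.mul_le_mul_right _ (Nat.mul_le_mul_right _ hsub)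
    _ ≤ (tau A d * #(A + A + A)) * n ^ 2 := Nat.mul_le_mul_right _ h1
    _ = tau A d * (#(A + A + A) * n ^ 2) := by ring
    _ ≤ tau A d * M ^ 3 := Nat.mul_le_mul_left _ h2

/-- Product with a nonzero tame element. -/
theorem tau_mul (x d : ZMod q) (hx : x ≠ 0) :
    tau A (x * d) * #A ≤ tau A x * tau A d := by
  have h := ruzsa_triangle_inequality_add_add_add A (x • A) ((x * d) • A)
  rw [card_dil hx] at h
  have e : x • A + (x * d) • A = x • (A + d • A) := by
    rw [dil_add, dil_dil]
  rw [e, card_dil hx] at h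
  exact h

end SPE

namespace SPE
variable {q : ℕ} [Fact q.Prime] {A : Finset (ZMod q)} {M : ℕ}

theorem tau_combo (hA : A.Nonempty) (hMa : #(A + A) ≤ M) (hnM : #A ≤ M)
    (x x' d : ZMod q)
    (htx : tau A x * #A ^ 3 ≤ 2 * M ^ 4) (htx' : tau A x' * #A ^ 3 ≤ 2 * M ^ 4)
    (htd : tau A d * #A ^ 21 ≤ 16 * M ^ 22) :
    tau A (x + (d + 1) * x') * #A ^ 35 ≤ 64 * M ^ 36 := by
  set n := #A with hn
  have hd1 : tau A (d + 1) * n ^ 24 ≤ 16 * M ^ 25 := by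
    calc tau A (d+1) * n ^ 24 = (tau A (d+1) * n ^ 3) * n ^ 21 := by ring
      _ ≤ (tau A d * M ^ 3) * n ^ 21 := Nat.mul_le_mul_right _ (tau_succ hA hMa d)
      _ = (tau A d * n ^ 21) * M ^ 3 := by ring
      _ ≤ (16 * M ^ 22) * M ^ 3 := Nat.mul_le_mul_right _ htd
      _ = 16 * M ^ 25 := by ring
  have hw : tau A ((d + 1) * x') * n ^ 28 ≤ 32 * M ^ 29 := by
    rcases eq_or_ne x' 0 with rfl | hx'
    · rw [mul_zero, tau_zero hA]
      calc n * n ^ 28 = n ^ 29 := by ring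
        _ ≤ M ^ 29 := Nat.pow_le_pow_left hnM 29
        _ ≤ 32 * M ^ 29 := Nat.le_mul_of_pos_left _ (by norm_num)
    · rw [mul_comm (d+1) x']
      calc tau A (x' * (d+1)) * n ^ 28 = (tau A (x' * (d+1)) * n) * n ^ 27 := by ring
        _ ≤ (tau A x' * tau A (d+1)) * n ^ 27 := Nat.mul_le_mul_right _ (tau_mul x' (d+1) hx')
        _ = (tau A x' * n ^ 3) * (tau A (d+1) * n ^ 24) := by ring
        _ ≤ (2 * M ^ 4) * (16 * M ^ 25) := Nat.mul_le_mul htx' hd1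
        _ = 32 * M ^ 29 := by ring
  have hy : tau A (x + (d+1)*x') ≤ #(A + x • A + ((d+1)*x') • A) := by
    rw [tau]
    refine (card_le_card (Finset.add_subset_add_left (add_dil_subset x ((d+1)*x') A))).trans ?_
    rw [show A + (x • A + ((d+1)*x') • A) = A + x • A + ((d+1)*x') • A by abel]
  have hC := C2 (A := A) x ((d+1)*x')
  have hP : #(A + A + A) * n ^ 2 ≤ M ^ 3 := (P3 hA).trans (Nat.pow_le_pow_left hMa 3)
  calc tau A (x + (d+1)*x') * n ^ 35
      ≤ #(A + x • A + ((d+1)*x') • A) * n ^ 35 := Nat.mul_le_mul_right _ hy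
    _ = (#(A + x • A + ((d+1)*x') • A) * (n * n)) * n ^ 33 := by ring
    _ ≤ (tau A x * tau A ((d+1)*x') * #(A + A + A)) * n ^ 33 :=
        Nat.mul_le_mul_right _ hC
    _ = (tau A x * n ^ 3) * ((tau A ((d+1)*x') * n ^ 28) * (#(A + A + A) * n ^ 2)) := by ring
    _ ≤ (2 * M ^ 4) * ((32 * M ^ 29) * M ^ 3) :=
        Nat.mul_le_mul htx (Nat.mul_le_mul hw hP)
    _ = 64 * M ^ 36 := by ring

end SPE

namespace SPE
variable {q : ℕ} [Fact q.Prime] {A : Finset (ZMod q)} {M : ℕ}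

theorem crack (hMa : #(A + A) ≤ M) {r : ZMod q} (hr : r ≠ 0) (B : Finset (ZMod q))
    (hB1 : B ⊆ A) (hB2 : r⁻¹ • B ⊆ A) : tau A r * #B ≤ M ^ 2 := by
  have h := ruzsa_triangle_inequality_add_add_add A B (r • A)
  have h1 : #(A + B) ≤ M := le_trans (card_le_card (Finset.add_subset_add_left hB1)) hMa
  have h2 : #(B + r • A) ≤ M := by
    have e : B + r • A = r • (r⁻¹ • B + A) := by
      rw [dil_add, dil_dil, mul_inv_cancel₀ hr, one_dil]
    rw [e, card_dil hr]
    exact le_trans (card_le_card (Finset.add_subset_add hB2 Finset.Subset.rfl)) hMa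
  calc tau A r * #B ≤ #(A + B) * #(B + r • A) := h
    _ ≤ M * M := Nat.mul_le_mul h1 h2
    _ = M ^ 2 := (sq M).symm

def fib (A : Finset (ZMod q)) (r : ZMod q) : ℕ :=
  #((A ×ˢ A).filter fun z => z.1 / z.2 = r)

theorem ratio_ne_zero (h0 : (0 : ZMod q) ∉ A) {r : ZMod q} (hr : r ∈ A / A) : r ≠ 0 := by
  rw [Finset.mem_div] at hr
  obtain ⟨a, ha, b, hb, rfl⟩ := hr
  exact div_ne_zero (ne_of_mem_of_not_mem ha h0) (ne_of_mem_of_not_mem hb h0)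

theorem sum_fib : ∑ r ∈ A / A, fib A r = #A ^ 2 := by
  have h := Finset.card_eq_sum_card_fiberwise (s := A ×ˢ A) (t := A / A)
      (f := fun z => z.1 / z.2) (fun z hz => by
        rw [Finset.mem_coe, Finset.mem_product] at hz; exact Finset.mem_coe.2 (Finset.div_mem_div hz.1 hz.2))
  rw [Finset.card_product] at h
  simp only [fib]
  rw [← h, sq]

theorem fib_inj (h0 : (0 : ZMod q) ∉ A) {r : ZMod q} (hr : r ≠ 0) :
    ∀ z ∈ (A ×ˢ A).filter (fun z => z.1 / z.2 = r),
      ∀ z' ∈ (A ×ˢ A).filter (fun z => z.1 / z.2 = r), z.1 = z'.1 → z = z' := by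
  rintro ⟨a, b⟩ hz ⟨a', b'⟩ hz' (h : a = a')
  simp only [Finset.mem_filter, Finset.mem_product] at hz hz'
  have hb : b ≠ 0 := ne_of_mem_of_not_mem hz.1.2 h0
  have hb' : b' ≠ 0 := ne_of_mem_of_not_mem hz'.1.2 h0
  have e1 : a = r * b := by rw [← hz.2]; exact (div_mul_cancel₀ a hb).symm
  have e2 : a' = r * b' := by rw [← hz'.2]; exact (div_mul_cancel₀ a' hb').symm
  have : b = b' := by
    have := e1.symm.trans (h.symm ▸ e2)
    exact mul_left_cancel₀ hr this
  simp [h, this]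

theorem fib_le (h0 : (0 : ZMod q) ∉ A) {r : ZMod q} (hr : r ≠ 0) : fib A r ≤ #A := by
  rw [fib]
  have := Finset.card_image_of_injOn (f := fun z => z.1)
    (fun z hz z' hz' h => fib_inj h0 hr z hz z' hz' h)
  rw [← this]
  refine Finset.card_le_card ?_
  intro x hx
  rw [Finset.mem_image] at hx
  obtain ⟨z, hz, rfl⟩ := hx
  simp only [Finset.mem_filter, Finset.mem_product] at hz
  exact hz.1.1

theorem tau_fib (h0 : (0 : ZMod q) ∉ A) (hMa : #(A + A) ≤ M) {r : ZMod q} (hr : r ≠ 0) :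
    tau A r * fib A r ≤ M ^ 2 := by
  set B : Finset (ZMod q) := ((A ×ˢ A).filter fun z => z.1 / z.2 = r).image (fun z => z.1)
    with hB
  have hcard : #B = fib A r :=
    Finset.card_image_of_injOn (fun z hz z' hz' h => fib_inj h0 hr z hz z' hz' h)
  have hB1 : B ⊆ A := by
    intro x hx
    rw [hB, Finset.mem_image] at hx
    obtain ⟨z, hz, rfl⟩ := hx
    simp only [Finset.mem_filter, Finset.mem_product] at hz
    exact hz.1.1
  have hB2 : r⁻¹ • B ⊆ A := by
    intro w hw
    rw [Finset.mem_smul_finset] at hw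
    obtain ⟨b, hb, rfl⟩ := hw
    rw [hB, Finset.mem_image] at hb
    obtain ⟨z, hz, rfl⟩ := hb
    simp only [Finset.mem_filter, Finset.mem_product] at hz
    have hz2 : z.2 ≠ 0 := ne_of_mem_of_not_mem hz.1.2 h0
    have e1 : z.1 = r * z.2 := by rw [← hz.2]; exact (div_mul_cancel₀ z.1 hz2).symm
    have : r⁻¹ • z.1 = z.2 := by
      rw [smul_eq_mul, e1, inv_mul_cancel_left₀ hr]
    rw [this]
    exact hz.1.2
  rw [← hcard]
  exact crack hMa hr B hB1 hB2

end SPE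

namespace SPE
variable {q : ℕ} [Fact q.Prime] {A : Finset (ZMod q)} {M : ℕ}

theorem ratio_card (h0 : (0 : ZMod q) ∉ A) (hMm : #(A * A) ≤ M) :
    #(A / A) * #A ≤ M ^ 2 := by
  classical
  set Au : Finset (ZMod q)ˣ :=
    A.attach.image (fun a => Units.mk0 a.1 (ne_of_mem_of_not_mem a.2 h0)) with hAu
  have hval : Au.image Units.val = A := by
    ext x
    simp only [hAu, Finset.mem_image, Finset.mem_attach, true_and, Subtype.exists]
    constructor
    · rintro ⟨u, ⟨a, ha, rfl⟩, rfl⟩; exact ha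
    · intro hx; exact ⟨Units.mk0 x (ne_of_mem_of_not_mem hx h0), ⟨x, hx, rfl⟩, rfl⟩
  have hinj : Function.Injective (Units.val : (ZMod q)ˣ → ZMod q) := fun _ _ h => Units.ext h
  have hcard : #Au = #A := by rw [← hval]; exact (Finset.card_image_of_injective _ hinj).symm
  have hmul : #(Au * Au) = #(A * A) := by
    have e : (Au * Au).image Units.val = Au.image Units.val * Au.image Units.val := by
      have := Finset.image_mul (f := Units.coeHom (ZMod q)) (s := Au) (t := Au)
      exact this
    rw [← Finset.card_image_of_injective (Au * Au) hinj, e, hval]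
  have hdiv : #(Au / Au) = #(A / A) := by
    have e : (Au / Au).image Units.val = Au.image Units.val / Au.image Units.val := by
      have := Finset.image_div (f := Units.coeHom (ZMod q)) (s := Au) (t := Au)
      exact this
    rw [← Finset.card_image_of_injective (Au / Au) hinj, e, hval]
  have h := Finset.ruzsa_triangle_inequality_div_mul_mul Au Au Au
  rw [hmul, hdiv, hcard] at h
  calc #(A / A) * #A ≤ #(A * A) * #(A * A) := h
    _ ≤ M * M := Nat.mul_le_mul hMm hMm
    _ = M ^ 2 := (sq M).symm

def TT (A : Finset (ZMod q)) (M : ℕ) : Finset (ZMod q) :=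
  (A / A).filter (fun r => #A ^ 3 ≤ 2 * M ^ 2 * fib A r)

theorem TT_tame (h0 : (0 : ZMod q) ∉ A) (hMa : #(A + A) ≤ M) :
    ∀ r ∈ TT A M, tau A r * #A ^ 3 ≤ 2 * M ^ 4 := by
  intro r hr
  rw [TT, Finset.mem_filter] at hr
  have hrne : r ≠ 0 := ratio_ne_zero h0 hr.1
  calc tau A r * #A ^ 3 ≤ tau A r * (2 * M ^ 2 * fib A r) := Nat.mul_le_mul_left _ hr.2
    _ = 2 * M ^ 2 * (tau A r * fib A r) := by ring
    _ ≤ 2 * M ^ 2 * M ^ 2 := Nat.mul_le_mul_left _ (tau_fib h0 hMa hrne)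
    _ = 2 * M ^ 4 := by ring

theorem TT_card (h0 : (0 : ZMod q) ∉ A) (hMm : #(A * A) ≤ M) :
    (#A) ≤ 2 * #(TT A M) := by
  rcases A.eq_empty_or_nonempty with rfl | hA
  · simp
  have hn : 0 < #A := hA.card_pos
  have hsub : TT A M ⊆ A / A := Finset.filter_subset _ _
  have hbad : 2 * M ^ 2 * ∑ r ∈ (A / A) \ TT A M, fib A r ≤ M ^ 2 * #A ^ 2 := by
    rw [Finset.mul_sum]
    calc ∑ r ∈ (A / A) \ TT A M, 2 * M ^ 2 * fib A r
        ≤ ∑ _r ∈ (A / A) \ TT A M, #A ^ 3 := by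
          refine Finset.sum_le_sum ?_
          intro r hr
          rw [Finset.mem_sdiff, TT, Finset.mem_filter] at hr
          have hx : ¬ (#A ^ 3 ≤ 2 * M ^ 2 * fib A r) := fun hc => hr.2 ⟨hr.1, hc⟩
          omega
      _ = #((A / A) \ TT A M) * #A ^ 3 := by rw [Finset.sum_const, smul_eq_mul]
      _ ≤ #(A / A) * #A ^ 3 := Nat.mul_le_mul_right _ (Finset.card_le_card (Finset.sdiff_subset))
      _ = (#(A / A) * #A) * #A ^ 2 := by ring
      _ ≤ M ^ 2 * #A ^ 2 := Nat.mul_le_mul_right _ (ratio_card h0 hMm)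
  -- hence the bad sum is at most #A^2 / 2, so the TT sum is at least #A^2/2
  have htot : ∑ r ∈ (A / A) \ TT A M, fib A r + ∑ r ∈ TT A M, fib A r = #A ^ 2 := by
    rw [Finset.sum_sdiff hsub, sum_fib]
  have hMpos : 0 < M ^ 2 := by
    have : 0 < M := lt_of_lt_of_le (by
      have : 0 < #(A * A) := by
        have : (A * A).Nonempty := hA.mul hA
        exact this.card_pos
      exact this) hMm
    positivity
  have hbad2 : 2 * ∑ r ∈ (A / A) \ TT A M, fib A r ≤ #A ^ 2 := by
    have h' : M ^ 2 * (2 * ∑ r ∈ (A / A) \ TT A M, fib A r) ≤ M ^ 2 * #A ^ 2 := by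
      calc M ^ 2 * (2 * ∑ r ∈ (A / A) \ TT A M, fib A r)
          = 2 * M ^ 2 * ∑ r ∈ (A / A) \ TT A M, fib A r := by ring
        _ ≤ M ^ 2 * #A ^ 2 := hbad
    exact Nat.le_of_mul_le_mul_left h' hMpos
  have hTsum : #A ^ 2 ≤ 2 * ∑ r ∈ TT A M, fib A r := by omega
  have hfible : ∑ r ∈ TT A M, fib A r ≤ #(TT A M) * #A := by
    calc ∑ r ∈ TT A M, fib A r ≤ ∑ r ∈ TT A M, #A := by
          refine Finset.sum_le_sum ?_
          intro r hr
          rw [TT, Finset.mem_filter] at hr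
          exact fib_le h0 (ratio_ne_zero h0 hr.1)
      _ = #(TT A M) * #A := by rw [Finset.sum_const, smul_eq_mul]
  have : #A ^ 2 ≤ 2 * (#(TT A M) * #A) := le_trans hTsum (by omega)
  have h2 : #A * #A ≤ (2 * #(TT A M)) * #A := by
    calc #A * #A = #A ^ 2 := (sq #A).symm
      _ ≤ 2 * (#(TT A M) * #A) := this
      _ = (2 * #(TT A M)) * #A := by ring
  exact Nat.le_of_mul_le_mul_right h2 hn

end SPE

namespace SPE
variable {q : ℕ} [Fact q.Prime] {A : Finset (ZMod q)}

def Ed (A : Finset (ZMod q)) (d : ZMod q) : ℕ :=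
  #(((A ×ˢ A) ×ˢ (A ×ˢ A)).filter fun zw => zw.1.1 + d * zw.1.2 = zw.2.1 + d * zw.2.2)

theorem energy_lower (A : Finset (ZMod q)) (d : ZMod q) :
    (#A) ^ 4 ≤ #(A + d • A) * Ed A d := by
  classical
  set P := A ×ˢ A with hP
  set S := A + d • A with hS
  have hmem : ∀ z ∈ P, z.1 + d * z.2 ∈ S := by
    intro z hz
    rw [hP, Finset.mem_product] at hz
    exact Finset.add_mem_add hz.1 (by
      rw [← smul_eq_mul]
      exact Finset.smul_mem_smul_finset hz.2)
  set Fb : ZMod q → ℕ := fun s => #(P.filter fun z => z.1 + d * z.2 = s) with hFb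
  have h1 : ∑ s ∈ S, Fb s = #A ^ 2 := by
    rw [hFb, ← Finset.card_eq_sum_card_fiberwise hmem, hP, Finset.card_product, sq]
  have h2 : Ed A d = ∑ s ∈ S, Fb s ^ 2 := by
    rw [Ed]
    have hmem2 : ∀ zw ∈ P ×ˢ P, (fun zw => zw.1.1 + d * zw.1.2) zw ∈ S := by
      intro zw hzw
      rw [Finset.mem_product] at hzw
      exact hmem _ hzw.1
    have e0 : ((P ×ˢ P).filter fun zw => zw.1.1 + d * zw.1.2 = zw.2.1 + d * zw.2.2)
        = (P ×ˢ P).filter fun zw =>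
            (zw.1.1 + d * zw.1.2 = zw.2.1 + d * zw.2.2) := rfl
    rw [show ((A ×ˢ A) ×ˢ (A ×ˢ A)) = P ×ˢ P from rfl]
    have hfib := Finset.card_eq_sum_card_fiberwise (s := (P ×ˢ P).filter
        fun zw => zw.1.1 + d * zw.1.2 = zw.2.1 + d * zw.2.2)
      (t := S) (f := fun zw => zw.1.1 + d * zw.1.2)
      (fun zw hzw => hmem2 zw (Finset.filter_subset _ _ hzw))
    rw [hfib]
    refine Finset.sum_congr rfl ?_
    intro s _
    have e1 : (((P ×ˢ P).filter fun zw => zw.1.1 + d * zw.1.2 = zw.2.1 + d * zw.2.2).filter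
          fun zw => zw.1.1 + d * zw.1.2 = s)
        = (P.filter fun z => z.1 + d * z.2 = s) ×ˢ (P.filter fun z => z.1 + d * z.2 = s) := by
      ext zw
      simp only [Finset.mem_filter, Finset.mem_product]
      constructor
      · rintro ⟨⟨⟨hz, hw⟩, he⟩, hs⟩
        exact ⟨⟨hz, hs⟩, hw, by rw [← he]; exact hs⟩
      · rintro ⟨⟨hz, hs1⟩, hw, hs2⟩
        exact ⟨⟨⟨hz, hw⟩, by rw [hs1, hs2]⟩, hs1⟩
    rw [e1, Finset.card_product, hFb, sq]
  -- Cauchy-Schwarz over ℤ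
  have hCSn : (∑ s ∈ S, Fb s) ^ 2 ≤ #S * ∑ s ∈ S, Fb s ^ 2 := by
    have h := sq_sum_le_card_mul_sum_sq (s := S) (f := fun s => ((Fb s : ℤ)))
    have h2 : (((∑ s ∈ S, Fb s) ^ 2 : ℕ) : ℤ) ≤ ((#S * ∑ s ∈ S, Fb s ^ 2 : ℕ) : ℤ) := by
      push_cast
      exact h
    exact_mod_cast h2
  calc #A ^ 4 = (#A ^ 2) ^ 2 := by ring
    _ = (∑ s ∈ S, Fb s) ^ 2 := by rw [h1]
    _ ≤ #S * ∑ s ∈ S, Fb s ^ 2 := hCSn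
    _ = #S * Ed A d := by rw [h2]

def offQ (A : Finset (ZMod q)) (d : ZMod q) : ℕ :=
  #(((A ×ˢ A) ×ˢ (A ×ˢ A)).filter fun zw =>
    zw.1.1 ≠ zw.2.1 ∧ zw.1.2 ≠ zw.2.2 ∧ zw.1.1 - zw.2.1 = d * (zw.2.2 - zw.1.2))

theorem Ed_le (A : Finset (ZMod q)) {d : ZMod q} (hd : d ≠ 0) :
    Ed A d ≤ #A ^ 2 + offQ A d := by
  classical
  set P := A ×ˢ A with hP
  have hsub : ((P ×ˢ P).filter fun zw => zw.1.1 + d * zw.1.2 = zw.2.1 + d * zw.2.2)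
      ⊆ ((P ×ˢ P).filter fun zw => zw.1 = zw.2) ∪
        ((P ×ˢ P).filter fun zw =>
          zw.1.1 ≠ zw.2.1 ∧ zw.1.2 ≠ zw.2.2 ∧ zw.1.1 - zw.2.1 = d * (zw.2.2 - zw.1.2)) := by
    intro zw hzw
    rw [Finset.mem_filter] at hzw
    obtain ⟨hmem, he⟩ := hzw
    rw [Finset.mem_union, Finset.mem_filter, Finset.mem_filter]
    rcases eq_or_ne zw.1.1 zw.2.1 with h1 | h1
    · left
      refine ⟨hmem, ?_⟩
      have : d * zw.1.2 = d * zw.2.2 := by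
        have := he
        rw [h1] at this
        exact add_left_cancel this
      have h2 : zw.1.2 = zw.2.2 := mul_left_cancel₀ hd this
      exact Prod.ext h1 h2
    · right
      refine ⟨hmem, h1, ?_, ?_⟩
      · intro h2
        apply h1
        rw [h2] at he
        exact add_right_cancel he
      · linear_combination he
  have hdiag : #((P ×ˢ P).filter fun zw => zw.1 = zw.2) = #A ^ 2 := by
    have e : ((P ×ˢ P).filter fun zw => zw.1 = zw.2) = P.image (fun z => (z, z)) := by
      ext zw
      simp only [Finset.mem_filter, Finset.mem_product, Finset.mem_image]
      constructor
      · rintro ⟨⟨hz, _⟩, he⟩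
        refine ⟨zw.1, hz, ?_⟩
        rw [Prod.ext_iff]
        exact ⟨rfl, he⟩
      · rintro ⟨z, hz, rfl⟩
        exact ⟨⟨hz, hz⟩, rfl⟩
    rw [e, Finset.card_image_of_injective _ (fun a b h => (Prod.ext_iff.1 h).1),
      hP, Finset.card_product, sq]
  calc Ed A d ≤ #(((P ×ˢ P).filter fun zw => zw.1 = zw.2) ∪
        ((P ×ˢ P).filter fun zw =>
          zw.1.1 ≠ zw.2.1 ∧ zw.1.2 ≠ zw.2.2 ∧ zw.1.1 - zw.2.1 = d * (zw.2.2 - zw.1.2))) :=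
        Finset.card_le_card hsub
    _ ≤ #((P ×ˢ P).filter fun zw => zw.1 = zw.2) + offQ A d := Finset.card_union_le _ _
    _ = #A ^ 2 + offQ A d := by rw [hdiag, offQ]

theorem offQ_sum (A : Finset (ZMod q)) (V : Finset (ZMod q)) (hV : ∀ d ∈ V, d ≠ 0) :
    ∑ d ∈ V, offQ A d ≤ #A ^ 4 := by
  classical
  set P := A ×ˢ A with hP
  have hdisj : ∀ d ∈ V, ∀ e ∈ V, d ≠ e → Disjoint
      ((P ×ˢ P).filter fun zw =>
        zw.1.1 ≠ zw.2.1 ∧ zw.1.2 ≠ zw.2.2 ∧ zw.1.1 - zw.2.1 = d * (zw.2.2 - zw.1.2))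
      ((P ×ˢ P).filter fun zw =>
        zw.1.1 ≠ zw.2.1 ∧ zw.1.2 ≠ zw.2.2 ∧ zw.1.1 - zw.2.1 = e * (zw.2.2 - zw.1.2)) := by
    intro d _ e _ hde
    rw [Finset.disjoint_left]
    intro zw h1 h2
    rw [Finset.mem_filter] at h1 h2
    obtain ⟨_, _, hne1, heq1⟩ := h1
    obtain ⟨_, _, hne2, heq2⟩ := h2
    have hsub : zw.2.2 - zw.1.2 ≠ 0 := sub_ne_zero.2 (Ne.symm hne1)
    exact hde (mul_right_cancel₀ hsub (heq1.symm.trans heq2))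
  have hbi : ∑ d ∈ V, offQ A d = #(V.biUnion fun d =>
      (P ×ˢ P).filter fun zw =>
        zw.1.1 ≠ zw.2.1 ∧ zw.1.2 ≠ zw.2.2 ∧ zw.1.1 - zw.2.1 = d * (zw.2.2 - zw.1.2)) := by
    rw [Finset.card_biUnion hdisj]
    rfl
  rw [hbi]
  calc #(V.biUnion fun d => (P ×ˢ P).filter fun zw =>
        zw.1.1 ≠ zw.2.1 ∧ zw.1.2 ≠ zw.2.2 ∧ zw.1.1 - zw.2.1 = d * (zw.2.2 - zw.1.2))
      ≤ #(P ×ˢ P) := Finset.card_le_card (Finset.biUnion_subset.2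
        (fun d _ => Finset.filter_subset _ _))
    _ = #A ^ 4 := by rw [Finset.card_product, hP, Finset.card_product]; ring

end SPE

namespace SPE
variable {q : ℕ} [Fact q.Prime] [NeZero q] {A : Finset (ZMod q)}

def VB (A : Finset (ZMod q)) : Finset (ZMod q) :=
  Finset.univ.filter (fun d => d ≠ 0 ∧ #(A + d • A) ^ 2 ≤ #A ^ 3)

theorem VB_E {d : ZMod q} (hd : d ∈ VB A) (hbig : 2 ^ 8 ≤ #A) : 16 * #A ^ 2 ≤ Ed A d := by
  rw [VB, Finset.mem_filter] at hd
  obtain ⟨-, hd0, hS⟩ := hd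
  set n := #A with hn
  have hnpos : 0 < n := lt_of_lt_of_le (by norm_num) hbig
  have h1 : n ^ 4 ≤ #(A + d • A) * Ed A d := energy_lower A d
  have h2 : n ^ 8 ≤ n ^ 3 * Ed A d ^ 2 := by
    calc n ^ 8 = (n ^ 4) ^ 2 := by ring
      _ ≤ (#(A + d • A) * Ed A d) ^ 2 := Nat.pow_le_pow_left h1 2
      _ = #(A + d • A) ^ 2 * Ed A d ^ 2 := by ring
      _ ≤ n ^ 3 * Ed A d ^ 2 := Nat.mul_le_mul_right _ hS
  have h3 : n ^ 5 ≤ Ed A d ^ 2 := by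
    have h' : n ^ 3 * n ^ 5 ≤ n ^ 3 * Ed A d ^ 2 := by
      calc n ^ 3 * n ^ 5 = n ^ 8 := by ring
        _ ≤ n ^ 3 * Ed A d ^ 2 := h2
    exact Nat.le_of_mul_le_mul_left h' (by positivity)
  have h4 : (16 * n ^ 2) ^ 2 ≤ Ed A d ^ 2 := by
    calc (16 * n ^ 2) ^ 2 = 2 ^ 8 * n ^ 4 := by ring
      _ ≤ n * n ^ 4 := Nat.mul_le_mul_right _ hbig
      _ = n ^ 5 := by ring
      _ ≤ Ed A d ^ 2 := h3
  by_contra hcon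
  push_neg at hcon
  have := Nat.pow_lt_pow_left hcon (n := 2) (by norm_num)
  omega

theorem VB_card (hbig : 2 ^ 8 ≤ #A) : 15 * #(VB A) * #A ^ 2 ≤ #A ^ 4 := by
  set n := #A with hn
  have h1 : ∀ d ∈ VB A, 15 * n ^ 2 ≤ offQ A d := by
    intro d hd
    have hd0 : d ≠ 0 := by
      rw [VB, Finset.mem_filter] at hd
      exact hd.2.1
    have hE := VB_E hd hbig
    have hEd := Ed_le A hd0
    rw [← hn] at hE hEd
    omega
  have h2 : ∑ d ∈ VB A, offQ A d ≤ n ^ 4 := offQ_sum A (VB A) (fun d hd => by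
    rw [VB, Finset.mem_filter] at hd
    exact hd.2.1)
  calc 15 * #(VB A) * n ^ 2 = ∑ _d ∈ VB A, 15 * n ^ 2 := by
        rw [Finset.sum_const, smul_eq_mul]; ring
    _ ≤ ∑ d ∈ VB A, offQ A d := Finset.sum_le_sum h1
    _ ≤ n ^ 4 := h2

end SPE

namespace SPE
variable {q : ℕ} [Fact q.Prime] [NeZero q]

theorem main_count (A : Finset (ZMod q)) (h0 : (0:ZMod q) ∉ A) (hA : A.Nonempty)
    {M : ℕ} (hMa : #(A + A) ≤ M) (hMm : #(A * A) ≤ M) (hnM : #A ≤ M)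
    (hq : #A ^ 2 < q) (hbig : 2 ^ 8 ≤ #A) :
    (#A) ^ 73 ≤ 2 ^ 12 * M ^ 72 := by
  classical
  have hnpos : 0 < #A := lt_of_lt_of_le (by norm_num) hbig
  have htameX : ∀ x ∈ insert (0:ZMod q) (TT A M), tau A x * #A ^ 3 ≤ 2 * M ^ 4 := by
    intro x hx
    rw [Finset.mem_insert] at hx
    rcases hx with rfl | hx
    · rw [tau_zero hA]
      calc #A * #A ^ 3 = #A ^ 4 := by ring
        _ ≤ M ^ 4 := Nat.pow_le_pow_left hnM 4
        _ ≤ 2 * M ^ 4 := by omega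
    · exact TT_tame h0 hMa x hx
  have hTcard := TT_card (M := M) h0 hMm
  have hXodd := Finset.card_le_card (Finset.subset_insert (0 : ZMod q) (TT A M))
  have hXcard : #A ≤ 2 * #(insert (0:ZMod q) (TT A M)) := by omega
  have hTpos : (TT A M).Nonempty := by rw [← Finset.card_pos]; omega
  obtain ⟨t0, ht0⟩ := hTpos
  have ht0X : t0 ∈ insert (0:ZMod q) (TT A M) := Finset.mem_insert_of_mem ht0
  have ht0ne : t0 ≠ 0 := ratio_ne_zero h0 (Finset.mem_of_mem_filter t0 ht0)
  have h0X : (0 : ZMod q) ∈ insert (0:ZMod q) (TT A M) := Finset.mem_insert_self _ _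
  set X : Finset (ZMod q) := insert (0:ZMod q) (TT A M) with hX
  set DX : Finset (ZMod q) := (((X ×ˢ X) ×ˢ (X ×ˢ X)).filter
      (fun p => p.2.1 ≠ p.2.2)).image
      (fun p => (p.1.1 - p.1.2) / (p.2.1 - p.2.2)) with hDX
  have hDtame : ∀ d ∈ DX, tau A d * #A ^ 21 ≤ 16 * M ^ 22 := by
    intro d hd
    rw [hDX, Finset.mem_image] at hd
    obtain ⟨p, hp, rfl⟩ := hd
    rw [Finset.mem_filter] at hp
    obtain ⟨hpmem, hpne⟩ := hp
    rw [Finset.mem_product] at hpmem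
    obtain ⟨hp1, hp2⟩ := hpmem
    rw [Finset.mem_product] at hp1 hp2
    have hu : p.2.1 - p.2.2 ≠ 0 := sub_ne_zero.2 hpne
    exact tau_ratio hA hMa hnM p.1.1 p.1.2 p.2.1 p.2.2 _ hu
      (by rw [mul_comm]; exact div_mul_cancel₀ _ hu)
      (htameX _ hp1.1) (htameX _ hp1.2) (htameX _ hp2.1) (htameX _ hp2.2)
  have h0DX : (0 : ZMod q) ∈ DX := by
    rw [hDX, Finset.mem_image]
    refine ⟨((0, 0), (t0, 0)), ?_, ?_⟩
    · rw [Finset.mem_filter, Finset.mem_product]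
      refine ⟨⟨?_, ?_⟩, ht0ne⟩
      · rw [Finset.mem_product]; exact ⟨h0X, h0X⟩
      · rw [Finset.mem_product]; exact ⟨ht0X, h0X⟩
    · simp
  have hVB := VB_card (A := A) hbig
  have hVBcard : 15 * #(VB A) ≤ #A ^ 2 := by
    have h' : (15 * #(VB A)) * #A ^ 2 ≤ #A ^ 2 * #A ^ 2 := by
      calc (15 * #(VB A)) * #A ^ 2 ≤ #A ^ 4 := hVB
        _ = #A ^ 2 * #A ^ 2 := by ring
    exact Nat.le_of_mul_le_mul_right h' (by positivity)
  have hs16 : 2 ^ 16 ≤ #A ^ 2 := by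
    calc (2:ℕ) ^ 16 = (2 ^ 8) ^ 2 := by norm_num
      _ ≤ #A ^ 2 := Nat.pow_le_pow_left hbig 2
  have key : ∃ dstar : ZMod q, dstar ≠ 0 ∧ dstar ∉ VB A ∧
      tau A dstar * #A ^ 35 ≤ 64 * M ^ 36 := by
    by_cases huniv : DX = Finset.univ
    · -- Case C : every element is a ratio of differences of tame elements
      have hcard : #(insert (0 : ZMod q) (VB A)) < #(Finset.univ : Finset (ZMod q)) := by
        have h1 : #(insert (0 : ZMod q) (VB A)) ≤ #(VB A) + 1 := Finset.card_insert_le _ _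
        have h2 : #(Finset.univ : Finset (ZMod q)) = q := by
          rw [Finset.card_univ, ZMod.card]
        omega
      have hne : (Finset.univ \ insert (0 : ZMod q) (VB A)).Nonempty := by
        rw [← Finset.card_pos, Finset.card_sdiff_of_subset (Finset.subset_univ _)]
        omega
      obtain ⟨dstar, hdmem⟩ := hne
      rw [Finset.mem_sdiff, Finset.mem_insert] at hdmem
      push_neg at hdmem
      refine ⟨dstar, hdmem.2.1, hdmem.2.2, ?_⟩
      have hd21 : tau A dstar * #A ^ 21 ≤ 16 * M ^ 22 :=
        hDtame dstar (by rw [huniv]; exact Finset.mem_univ _)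
      calc tau A dstar * #A ^ 35 = (tau A dstar * #A ^ 21) * #A ^ 14 := by ring
        _ ≤ (16 * M ^ 22) * #A ^ 14 := Nat.mul_le_mul_right _ hd21
        _ ≤ (16 * M ^ 22) * M ^ 14 := Nat.mul_le_mul_left _ (Nat.pow_le_pow_left hnM 14)
        _ = 16 * M ^ 36 := by ring
        _ ≤ 64 * M ^ 36 := Nat.mul_le_mul_right _ (by norm_num)
    · -- Case D : a step where the walk exits DX
      have hstep : ∃ d ∈ DX, d + 1 ∉ DX := by
        by_contra hc
        push_neg at hc
        apply huniv
        apply Finset.eq_univ_of_forall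
        intro x
        obtain ⟨k, rfl⟩ := ZMod.natCast_zmod_surjective x
        induction k with
        | zero => simpa using h0DX
        | succ m ih =>
            have := hc _ ih
            push_cast
            exact this
      obtain ⟨d, hdDX, hd1⟩ := hstep
      set Yim : Finset (ZMod q) := (X ×ˢ X).image (fun z => z.1 + (d+1) * z.2) with hYim
      have hinj : ∀ z ∈ X ×ˢ X, ∀ z' ∈ X ×ˢ X,
          z.1 + (d+1) * z.2 = z'.1 + (d+1) * z'.2 → z = z' := by
        intro z hz z' hz' he
        rw [Finset.mem_product] at hz hz'
        rcases eq_or_ne z.2 z'.2 with h2 | h2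
        · have h1 : z.1 = z'.1 := by
            rw [h2] at he
            exact add_right_cancel he
          exact Prod.ext h1 h2
        · exfalso
          apply hd1
          rw [hDX, Finset.mem_image]
          refine ⟨((z.1, z'.1), (z'.2, z.2)), ?_, ?_⟩
          · rw [Finset.mem_filter, Finset.mem_product]
            refine ⟨⟨?_, ?_⟩, Ne.symm h2⟩
            · rw [Finset.mem_product]; exact ⟨hz.1, hz'.1⟩
            · rw [Finset.mem_product]; exact ⟨hz'.2, hz.2⟩
          · have hsub : z'.2 - z.2 ≠ 0 := sub_ne_zero.2 (Ne.symm h2)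
            show (z.1 - z'.1) / (z'.2 - z.2) = d + 1
            rw [div_eq_iff hsub]
            linear_combination he
      have hYcard : #Yim = #X * #X := by
        rw [hYim, Finset.card_image_of_injOn (fun z hz z' hz' he => hinj z hz z' hz' he),
          Finset.card_product]
      have hYbig : #A ^ 2 ≤ 4 * #Yim := by
        calc #A ^ 2 ≤ (2 * #X) ^ 2 := Nat.pow_le_pow_left hXcard 2
          _ = 4 * (#X * #X) := by ring
          _ = 4 * #Yim := by rw [hYcard]
      have hpick : (Yim \ insert (0 : ZMod q) (VB A)).Nonempty := by
        rw [← Finset.card_pos]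
        have h1 : #Yim ≤ #(Yim \ insert (0 : ZMod q) (VB A)) + #(insert (0 : ZMod q) (VB A)) :=
          Finset.card_le_card_sdiff_add_card
        have h2 : #(insert (0 : ZMod q) (VB A)) ≤ #(VB A) + 1 := Finset.card_insert_le _ _
        -- 4#Yim ≥ #A², 60(#VB + 1) ≤ 4#A² + 60 < 15#A² ≤ 60#Yim
        omega
      obtain ⟨ystar, hymem⟩ := hpick
      rw [Finset.mem_sdiff, Finset.mem_insert] at hymem
      push_neg at hymem
      obtain ⟨hyY, hyne, hyVB⟩ := hymem
      rw [hYim, Finset.mem_image] at hyY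
      obtain ⟨z, hz, rfl⟩ := hyY
      rw [Finset.mem_product] at hz
      refine ⟨z.1 + (d+1) * z.2, hyne, hyVB, ?_⟩
      exact tau_combo hA hMa hnM z.1 z.2 d (htameX _ hz.1) (htameX _ hz.2)
        (hDtame d hdDX)
  obtain ⟨dstar, hd0, hdVB, htame⟩ := key
  have hnotbad : #A ^ 3 < tau A dstar ^ 2 := by
    have hcc : ¬ (dstar ≠ 0 ∧ #(A + dstar • A) ^ 2 ≤ #A ^ 3) := by
      intro hcc
      exact hdVB (by rw [VB, Finset.mem_filter]; exact ⟨Finset.mem_univ _, hcc⟩)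
    push_neg at hcc
    have := hcc hd0
    rw [tau]
    omega
  calc #A ^ 73 = #A ^ 3 * (#A ^ 35) ^ 2 := by ring
    _ ≤ tau A dstar ^ 2 * (#A ^ 35) ^ 2 :=
        Nat.mul_le_mul_right _ (le_of_lt hnotbad)
    _ = (tau A dstar * #A ^ 35) ^ 2 := by ring
    _ ≤ (64 * M ^ 36) ^ 2 := Nat.pow_le_pow_left htame 2
    _ = 2 ^ 12 * M ^ 72 := by ring

end SPE

namespace SPE
theorem sum_product_estimate' :
    ∃ ε > (0 : ℝ), ∃ c > (0 : ℝ), ∀ q : ℕ, q.Prime →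
      ∀ A : Finset (ZMod q), A.Nonempty → (A.card : ℝ) < (q : ℝ) ^ ((1 : ℝ) / 2) →
        c * (A.card : ℝ) ^ (1 + (1:ℝ)/100) ≤ ((max (A + A).card (A * A).card : ℕ) : ℝ) := by
  refine ⟨1/100, by norm_num, 1/2^1000, by positivity, ?_⟩
  intro q hq A hA hcard
  haveI : Fact q.Prime := ⟨hq⟩
  haveI : NeZero q := ⟨hq.ne_zero⟩
  set Mn : ℕ := max #(A + A) #(A * A) with hMn
  have hMn1 : 1 ≤ Mn := by
    have : (A + A).Nonempty := hA.add hA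
    have h1 : 1 ≤ #(A + A) := this.card_pos
    exact le_trans h1 (le_max_left _ _)
  have hAM : #A ≤ Mn := le_trans (Finset.card_le_card_add_right hA) (le_max_left _ _)
  -- #A ^ 2 < q
  have hq2 : #A ^ 2 < q := by
    have h1 : ((#A : ℝ)) ^ (2:ℕ) < ((q : ℝ) ^ ((1:ℝ)/2)) ^ (2:ℕ) := by
      apply pow_lt_pow_left₀ hcard (by positivity)
      norm_num
    have h2 : ((q : ℝ) ^ ((1:ℝ)/2)) ^ (2:ℕ) = (q:ℝ) := by
      rw [← Real.rpow_natCast ((q:ℝ) ^ ((1:ℝ)/2)) 2, ← Real.rpow_mul (by positivity)]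
      norm_num
    rw [h2] at h1
    exact_mod_cast h1
  by_cases hsmall : #A ≤ 512
  · -- small sets : the bound is below 1
    have hb1 : ((#A : ℝ)) ^ (1 + (1:ℝ)/100) ≤ (512 : ℝ) ^ (2:ℝ) := by
      calc ((#A : ℝ)) ^ (1 + (1:ℝ)/100) ≤ (512 : ℝ) ^ (1 + (1:ℝ)/100) := by
            apply Real.rpow_le_rpow (by positivity) (by exact_mod_cast hsmall) (by norm_num)
        _ ≤ (512 : ℝ) ^ (2:ℝ) := by
            apply Real.rpow_le_rpow_of_exponent_le (by norm_num) (by norm_num)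
    have hb2 : (512 : ℝ) ^ (2:ℝ) = 262144 := by
      rw [show (2:ℝ) = ((2:ℕ):ℝ) by norm_num, Real.rpow_natCast]
      norm_num
    have hM0 : (1 : ℝ) ≤ (Mn : ℝ) := by exact_mod_cast hMn1
    calc (1/2^1000 : ℝ) * (#A : ℝ) ^ (1 + (1:ℝ)/100) ≤ (1/2^1000 : ℝ) * 262144 := by
          rw [hb2] at hb1
          exact mul_le_mul_of_nonneg_left hb1 (by positivity)
      _ ≤ 1 := by
          rw [div_mul_eq_mul_div, one_mul, div_le_one (by positivity)]; exact le_trans (by norm_num : (262144:ℝ) ≤ 2 ^ 18) (pow_le_pow_right₀ (by norm_num) (by norm_num))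
      _ ≤ (Mn : ℝ) := hM0
  · -- large sets : use the main counting theorem
    push_neg at hsmall
    set A' : Finset (ZMod q) := A.erase 0 with hA'
    have hbig : 2 ^ 8 ≤ #A' := by
      have h := Finset.pred_card_le_card_erase (s := A) (a := 0)
      rw [← hA'] at h
      omega
    have hA'ne : A'.Nonempty := by
      rw [← Finset.card_pos]
      omega
    have h0 : (0 : ZMod q) ∉ A' := Finset.notMem_erase _ _
    have herase : A' ⊆ A := Finset.erase_subset _ _
    have hMa : #(A' + A') ≤ Mn :=
      le_trans (Finset.card_le_card (Finset.add_subset_add herase herase)) (le_max_left _ _)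
    have hMm : #(A' * A') ≤ Mn :=
      le_trans (Finset.card_le_card (Finset.mul_subset_mul herase herase)) (le_max_right _ _)
    have hnM : #A' ≤ Mn := le_trans (Finset.card_le_card herase) hAM
    have hq2' : #A' ^ 2 < q :=
      lt_of_le_of_lt (Nat.pow_le_pow_left (Finset.card_le_card herase) 2) hq2
    have hmain : #A' ^ 73 ≤ 2 ^ 12 * Mn ^ 72 :=
      main_count A' h0 hA'ne hMa hMm hnM hq2' hbig
    -- real form
    set x : ℝ := (#A' : ℝ) with hxdef
    set m : ℝ := (Mn : ℝ) with hmdef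
    have hx1 : (1:ℝ) ≤ x := by
      rw [hxdef]
      have : 1 ≤ #A' := by omega
      exact_mod_cast this
    have hm1 : (1:ℝ) ≤ m := by rw [hmdef]; exact_mod_cast hMn1
    have hmain' : x ^ (73:ℕ) ≤ 2 ^ 12 * m ^ (72:ℕ) := by
      rw [hxdef, hmdef]
      exact_mod_cast hmain
    -- x^{73/72} ≤ 2 * m
    have hkey : x ^ ((73:ℝ)/72) ≤ 2 * m := by
      have h1 : x ^ ((73:ℝ)/72) = (x ^ (73:ℕ)) ^ ((1:ℝ)/72) := by
        rw [← Real.rpow_natCast x 73, ← Real.rpow_mul (by positivity)]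
        norm_num
      have h2 : (x ^ (73:ℕ)) ^ ((1:ℝ)/72) ≤ (2 ^ 12 * m ^ (72:ℕ)) ^ ((1:ℝ)/72) :=
        Real.rpow_le_rpow (by positivity) hmain' (by norm_num)
      have h3 : ((2:ℝ) ^ 12 * m ^ (72:ℕ)) ^ ((1:ℝ)/72)
          = ((2:ℝ)^(12:ℕ)) ^ ((1:ℝ)/72) * m := by
        rw [Real.mul_rpow (by positivity) (by positivity)]
        congr 1
        rw [← Real.rpow_natCast m 72, ← Real.rpow_mul (by positivity)]
        norm_num
      have h4 : ((2:ℝ)^(12:ℕ)) ^ ((1:ℝ)/72) ≤ 2 := by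
        rw [← Real.rpow_natCast (2:ℝ) 12, ← Real.rpow_mul (by norm_num)]
        calc (2:ℝ) ^ ((12:ℝ) * (1/72)) ≤ (2:ℝ) ^ (1:ℝ) :=
              Real.rpow_le_rpow_of_exponent_le (by norm_num) (by norm_num)
          _ = 2 := Real.rpow_one 2
      calc x ^ ((73:ℝ)/72) = (x ^ (73:ℕ)) ^ ((1:ℝ)/72) := h1
        _ ≤ (2 ^ 12 * m ^ (72:ℕ)) ^ ((1:ℝ)/72) := h2
        _ = ((2:ℝ)^(12:ℕ)) ^ ((1:ℝ)/72) * m := h3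
        _ ≤ 2 * m := mul_le_mul_of_nonneg_right h4 (by positivity)
    -- (#A : ℝ) ≤ 2 * x
    have hA2x : ((#A : ℕ) : ℝ) ≤ 2 * x := by
      have h : #A ≤ 2 * #A' := by
        have h2 := Finset.pred_card_le_card_erase (s := A) (a := 0)
        rw [← hA'] at h2
        omega
      calc ((#A : ℕ) : ℝ) ≤ ((2 * #A' : ℕ) : ℝ) := by exact_mod_cast h
        _ = 2 * x := by push_cast; ring
    have hfinal : ((#A : ℕ) : ℝ) ^ (1 + (1:ℝ)/100) ≤ 8 * m := by
      calc ((#A : ℕ) : ℝ) ^ (1 + (1:ℝ)/100) ≤ (2 * x) ^ (1 + (1:ℝ)/100) :=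
            Real.rpow_le_rpow (by positivity) hA2x (by norm_num)
        _ ≤ (2 * x) ^ ((73:ℝ)/72) := by
            apply Real.rpow_le_rpow_of_exponent_le ?_ (by norm_num)
            nlinarith [hx1]
        _ = 2 ^ ((73:ℝ)/72) * x ^ ((73:ℝ)/72) := Real.mul_rpow (by norm_num) (by positivity)
        _ ≤ 2 ^ ((2:ℝ)) * (2 * m) := by
            apply mul_le_mul ?_ hkey (by positivity) (by positivity)
            exact Real.rpow_le_rpow_of_exponent_le (by norm_num) (by norm_num)
        _ = 8 * m := by
            rw [show ((2:ℝ)) ^ ((2:ℝ)) = 4 by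
              rw [show (2:ℝ) = ((2:ℕ):ℝ) from by norm_num, Real.rpow_natCast]
              norm_num]
            ring
    calc (1/2^1000 : ℝ) * ((#A : ℕ) : ℝ) ^ (1 + (1:ℝ)/100)
        ≤ (1/2^1000 : ℝ) * (8 * m) := mul_le_mul_of_nonneg_left hfinal (by positivity)
      _ ≤ m := by
          have h8 : (1/2^1000 : ℝ) * 8 ≤ 1 := by
            rw [div_mul_eq_mul_div, one_mul, div_le_one (by positivity)]; exact le_trans (by norm_num : (8:ℝ) ≤ 2 ^ 3) (pow_le_pow_right₀ (by norm_num) (by norm_num))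
          nlinarith [hm1]
      _ = ((max (A + A).card (A * A).card : ℕ) : ℝ) := by rw [hmdef, hMn]
end SPE


/-- **Theorem 1 (Konyagin).** There exist absolute constants `ε > 0` and `c > 0` such
that for every prime `q` and every nonempty subset `A` of `F = ℤ/qℤ` with
`|A| < |F|^(1/2)`, one has `max (|A+A|, |A·A|) ≥ c * |A|^(1+ε)`. -/
theorem sum_product_estimate :
    ∃ ε > (0 : ℝ), ∃ c > (0 : ℝ), ∀ q : ℕ, q.Prime →
      ∀ A : Finset (ZMod q), A.Nonempty → (A.card : ℝ) < (q : ℝ) ^ ((1 : ℝ) / 2) →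
        c * (A.card : ℝ) ^ (1 + ε) ≤ ((max (A + A).card (A * A).card : ℕ) : ℝ) := by
  obtain ⟨ε, hε, c, hc, h⟩ := SPE.sum_product_estimate'
  exact ⟨1/100, by norm_num, c, hc, h⟩
end

section
/- There exists an absolute constant c > 0 such that for every prime q and every nonempty subset A of F = ℤ/qℤ with |A| < |F|^{1/2}, one has |A−A| · |I(A)| ≥ c·|A|^{5/2}. -/
open scoped Pointwise

/-- `I(A) = {a₁(a₂-a₃) + a₄(a₅-a₆) : a₁,…,a₆ ∈ A}`. -/
def Iset {q : ℕ} (A : Finset (ZMod q)) : Finset (ZMod q) :=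
  (A ×ˢ A ×ˢ A ×ˢ A ×ˢ A ×ˢ A).image fun p =>
    p.1 * (p.2.1 - p.2.2.1) + p.2.2.2.1 * (p.2.2.2.2.1 - p.2.2.2.2.2)

namespace KonyaginAux

variable {q : ℕ}

lemma mem_Iset {A : Finset (ZMod q)} {a x y b u v : ZMod q}
    (ha : a ∈ A) (hx : x ∈ A) (hy : y ∈ A) (hb : b ∈ A) (hu : u ∈ A) (hv : v ∈ A) :
    a * (x - y) + b * (u - v) ∈ Iset A := by
  refine Finset.mem_image.2 ⟨(a, x, y, b, u, v), ?_, rfl⟩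
  simp only [Finset.mem_product]
  exact ⟨ha, hx, hy, hb, hu, hv⟩

lemma mul_sub_mul_mem_Iset {A : Finset (ZMod q)} {δ δ' a b : ZMod q}
    (hδ : δ ∈ A - A) (hδ' : δ' ∈ A - A) (ha : a ∈ A) (hb : b ∈ A) :
    a * δ - b * δ' ∈ Iset A := by
  obtain ⟨x, hx, y, hy, rfl⟩ := Finset.mem_sub.1 hδ
  obtain ⟨u, hu, v, hv, rfl⟩ := Finset.mem_sub.1 hδ'
  have h : a * (x - y) - b * (u - v) = a * (x - y) + b * (v - u) := by ring
  rw [h]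
  exact mem_Iset ha hx hy hb hv hu

/-- `θ` is a ratio of two nonzero elements of `A - A`. -/
def IsRatio (A : Finset (ZMod q)) (θ : ZMod q) : Prop :=
  ∃ δ ∈ A - A, ∃ δ' ∈ A - A, δ ≠ 0 ∧ δ' ≠ 0 ∧ θ * δ = δ'

lemma isRatio_one {A : Finset (ZMod q)} (h2 : 1 < A.card) : IsRatio A 1 := by
  obtain ⟨a, ha, b, hb, hne⟩ := Finset.one_lt_card.1 h2
  exact ⟨a - b, Finset.mem_sub.2 ⟨a, ha, b, hb, rfl⟩, a - b,
    Finset.mem_sub.2 ⟨a, ha, b, hb, rfl⟩, sub_ne_zero.2 hne, sub_ne_zero.2 hne, one_mul _⟩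

variable [Fact (Nat.Prime q)]

lemma card_le_card_sub {A : Finset (ZMod q)} (hA : A.Nonempty) :
    A.card ≤ (A - A).card := by
  obtain ⟨a₀, ha₀⟩ := hA
  refine Finset.card_le_card_of_injOn (fun a => a - a₀) (fun a ha => ?_) ?_
  · exact Finset.mem_sub.2 ⟨a, ha, a₀, ha₀, rfl⟩
  · intro a _ b _ h
    simpa using h

lemma card_sub_le_Iset {A : Finset (ZMod q)} {ap : ZMod q} (ha : ap ∈ A) (h0 : ap ≠ 0) :
    (A - A).card ≤ (Iset A).card := by
  refine Finset.card_le_card_of_injOn (fun w => ap * w) (fun w hw => ?_) ?_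
  · have := mul_sub_mul_mem_Iset (A := A) hw (Finset.mem_sub.2 ⟨ap, ha, ap, ha, rfl⟩) ha ha
    simpa using this
  · intro w _ w' _ h
    exact mul_left_cancel₀ h0 h

lemma card_ratio_le {A : Finset (ZMod q)} {θ : ZMod q} (hθ : IsRatio A θ) :
    (A - θ • A).card ≤ (Iset A).card := by
  obtain ⟨δ, hδ, δ', hδ', hδ0, _hδ'0, hmul⟩ := hθ
  calc (A - θ • A).card = ((A - θ • A).image (fun z => δ * z)).card :=
        (Finset.card_image_of_injective _ (mul_right_injective₀ hδ0)).symm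
    _ ≤ (Iset A).card := by
        refine Finset.card_le_card ?_
        intro w hw
        obtain ⟨z, hz, rfl⟩ := Finset.mem_image.1 hw
        obtain ⟨a, ha, t, ht, rfl⟩ := Finset.mem_sub.1 hz
        obtain ⟨b, hb, rfl⟩ := Finset.mem_smul_finset.1 ht
        have h : δ * (a - θ • b) = a * δ - b * δ' := by
          rw [smul_eq_mul, ← hmul]; ring
        rw [h]
        exact mul_sub_mul_mem_Iset hδ hδ' ha hb

lemma card_sub_comm (s t : Finset (ZMod q)) : (s - t).card = (t - s).card := by
  rw [← Finset.card_neg (t - s)]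
  congr 1
  ext x
  simp only [Finset.mem_neg, Finset.mem_sub]
  constructor
  · rintro ⟨a, ha, b, hb, rfl⟩
    exact ⟨b - a, ⟨b, hb, a, ha, rfl⟩, by ring⟩
  · rintro ⟨y, ⟨b, hb, a, ha, rfl⟩, rfl⟩
    exact ⟨a, ha, b, hb, by ring⟩

lemma sub_sub_eq (A : Finset (ZMod q)) : A - A - A = A - (A + A) := by
  ext x
  simp only [Finset.mem_sub, Finset.mem_add]
  constructor
  · rintro ⟨w, ⟨a, ha, b, hb, rfl⟩, c, hc, rfl⟩
    exact ⟨a, ha, b + c, ⟨b, hb, c, hc, rfl⟩, by ring⟩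
  · rintro ⟨a, ha, s, ⟨b, hb, c, hc, rfl⟩, rfl⟩
    exact ⟨a - b, ⟨a, ha, b, hb, rfl⟩, c, hc, by ring⟩

lemma ratio_or_zero {A : Finset (ZMod q)} {μ : ZMod q}
    (h : (A - μ • A).card < A.card * A.card) : μ = 0 ∨ IsRatio A μ := by
  have hmaps : ∀ p ∈ A ×ˢ A, p.1 - μ * p.2 ∈ A - μ • A := by
    intro p hp
    obtain ⟨h1, h2⟩ := Finset.mem_product.1 hp
    exact Finset.mem_sub.2 ⟨p.1, h1, μ * p.2,
      Finset.mem_smul_finset.2 ⟨p.2, h2, rfl⟩, rfl⟩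
  have hcard : (A - μ • A).card < (A ×ˢ A).card := by
    rwa [Finset.card_product]
  obtain ⟨p, hp, p', hp', hne, heq⟩ :=
    Finset.exists_ne_map_eq_of_card_lt_of_maps_to hcard hmaps
  have hbb : p.2 ≠ p'.2 := by
    intro h2
    apply hne
    have h1 : p.1 = p'.1 := by
      rw [h2] at heq
      exact sub_left_inj.mp heq
    exact Prod.ext h1 h2
  by_cases hμ : μ = 0
  · exact Or.inl hμ
  · refine Or.inr ⟨p.2 - p'.2, ?_, p.1 - p'.1, ?_, sub_ne_zero.2 hbb, ?_, ?_⟩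
    · exact Finset.mem_sub.2 ⟨p.2, (Finset.mem_product.1 hp).2, p'.2, (Finset.mem_product.1 hp').2, rfl⟩
    · exact Finset.mem_sub.2 ⟨p.1, (Finset.mem_product.1 hp).1, p'.1, (Finset.mem_product.1 hp').1, rfl⟩
    · have : μ * (p.2 - p'.2) = p.1 - p'.1 := by linear_combination -heq
      rw [← this]
      exact mul_ne_zero hμ (sub_ne_zero.2 hbb)
    · linear_combination -heq

section Counting

variable {β γ : Type*} [DecidableEq β] [DecidableEq γ]

omit [Fact (Nat.Prime q)] in
lemma cs_energy (s : Finset β) (T : Finset γ) (ψ : β → γ) (h : ∀ x ∈ s, ψ x ∈ T) :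
    ((s.card : ℝ))^2 ≤ (T.card : ℝ) *
      (((s ×ˢ s).filter fun pq => ψ pq.1 = ψ pq.2).card : ℝ) := by
  have hsum : s.card = ∑ z ∈ T, (s.filter fun p => ψ p = z).card :=
    Finset.card_eq_sum_card_fiberwise h
  have hU : ((s ×ˢ s).filter fun pq => ψ pq.1 = ψ pq.2).card
      = ∑ z ∈ T, (s.filter fun p => ψ p = z).card ^ 2 := by
    rw [Finset.card_eq_sum_card_fiberwise (f := fun pq => ψ pq.1) (t := T)
      (fun pq hpq => h _ (Finset.mem_product.1 (Finset.mem_filter.1 hpq).1).1)]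
    refine Finset.sum_congr rfl fun z _ => ?_
    rw [sq, ← Finset.card_product]
    congr 1
    ext ⟨p, p'⟩
    simp only [Finset.mem_filter, Finset.mem_product]
    constructor
    · rintro ⟨⟨⟨h1, h2⟩, he⟩, hz1⟩
      exact ⟨⟨h1, hz1⟩, h2, by rw [← he]; exact hz1⟩
    · rintro ⟨⟨h1, hz1⟩, h2, hz2⟩
      exact ⟨⟨⟨h1, h2⟩, by rw [hz1, hz2]⟩, hz1⟩
  calc ((s.card : ℝ))^2 = (∑ z ∈ T, ((s.filter fun p => ψ p = z).card : ℝ))^2 := by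
        rw [hsum]; push_cast; ring
    _ ≤ (T.card : ℝ) * ∑ z ∈ T, ((s.filter fun p => ψ p = z).card : ℝ)^2 :=
        sq_sum_le_card_mul_sum_sq
    _ = _ := by rw [hU]; push_cast; ring

omit [Fact (Nat.Prime q)] in
lemma energy_split (s : Finset β) (ψ : β → γ) :
    ((s ×ˢ s).filter fun pq => ψ pq.1 = ψ pq.2).card
      = s.card + (((s ×ˢ s).filter fun pq => ψ pq.1 = ψ pq.2 ∧ pq.1 ≠ pq.2)).card := by
  set U := (s ×ˢ s).filter fun pq => ψ pq.1 = ψ pq.2 with hUdef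
  have h1 := Finset.card_filter_add_card_filter_not
    (s := U) (p := fun pq => pq.1 = pq.2)
  have hdiag : U.filter (fun pq => pq.1 = pq.2) = s.image (fun p => (p, p)) := by
    ext ⟨p, p'⟩
    simp only [hUdef, Finset.mem_filter, Finset.mem_product, Finset.mem_image, Prod.mk.injEq]
    constructor
    · rintro ⟨⟨⟨ha, _⟩, _⟩, hpp⟩
      exact ⟨p, ha, rfl, hpp⟩
    · rintro ⟨a, ha, rfl, rfl⟩
      exact ⟨⟨⟨ha, ha⟩, rfl⟩, rfl⟩
  have hcd : (U.filter (fun pq => pq.1 = pq.2)).card = s.card := by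
    rw [hdiag]
    exact Finset.card_image_of_injective _ (fun a b h => congrArg Prod.fst h)
  have hne' : U.filter (fun pq => ¬ pq.1 = pq.2)
      = (s ×ˢ s).filter (fun pq => ψ pq.1 = ψ pq.2 ∧ pq.1 ≠ pq.2) := by
    ext pq
    simp only [hUdef, Finset.mem_filter, Ne]
    tauto
  rw [← hne', ← hcd]
  omega

end Counting

end KonyaginAux

set_option maxHeartbeats 8000000 in
/-- **Theorem 2 (Konyagin).** There is an absolute constant `c > 0` such that for every
prime `q` and every nonempty `A ⊆ ℤ/qℤ` with `|A| < |F|^(1/2)` one has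
`|A-A| * |I(A)| ≥ c * |A|^(5/2)`. -/
theorem diff_mul_I_ge :
    ∃ c > (0 : ℝ), ∀ q : ℕ, q.Prime →
      ∀ A : Finset (ZMod q), A.Nonempty → (A.card : ℝ) < (q : ℝ) ^ ((1 : ℝ) / 2) →
        c * (A.card : ℝ) ^ ((5 : ℝ) / 2) ≤ ((A - A).card : ℝ) * ((Iset A).card : ℝ) := by
  classical
  refine ⟨1/2, by norm_num, ?_⟩
  intro q hq A hA hcard
  haveI : Fact (Nat.Prime q) := ⟨hq⟩
  haveI : NeZero q := ⟨hq.ne_zero⟩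
  have hD1 : 0 < (A - A).card := Finset.card_pos.2 (hA.sub hA)
  have hI1 : 0 < (Iset A).card := Finset.card_pos.2 (by
    obtain ⟨a, ha⟩ := hA
    exact ⟨_, KonyaginAux.mem_Iset ha ha ha ha ha ha⟩)
  by_cases hsmall : A.card < 2
  · have hn1 : A.card = 1 := le_antisymm (by omega) (Finset.card_pos.2 hA)
    rw [hn1]
    have hd : (1:ℝ) ≤ ((A - A).card : ℝ) := by exact_mod_cast hD1
    have hi : (1:ℝ) ≤ ((Iset A).card : ℝ) := by exact_mod_cast hI1
    push_cast
    rw [Real.one_rpow]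
    nlinarith
  push_neg at hsmall
  by_contra hbad
  push_neg at hbad
  -- notation
  have hn2 : 2 ≤ A.card := hsmall
  set n := A.card with hndef
  set N : ℝ := (n : ℝ) with hNdef
  have hN2 : (2:ℝ) ≤ N := by rw [hNdef]; exact_mod_cast hn2
  have hN0 : (0:ℝ) < N := by linarith
  set R : ℝ := Real.sqrt N with hRdef
  have hR0 : (0:ℝ) < R := Real.sqrt_pos.2 hN0
  have hR2 : R^2 = N := Real.sq_sqrt hN0.le
  have hR1 : (1:ℝ) ≤ R := by nlinarith
  have hrpow : N ^ ((5:ℝ)/2) = N^2 * R := by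
    have h1 : N ^ ((5:ℝ)/2) = N ^ (2:ℝ) * N ^ ((1:ℝ)/2) := by
      rw [← Real.rpow_add hN0]; norm_num
    have h2' : N ^ (2:ℝ) = N ^ (2:ℕ) := by
      rw [← Real.rpow_natCast N 2]; norm_num
    have h3 : N ^ ((1:ℝ)/2) = R := by
      rw [hRdef, Real.sqrt_eq_rpow]
    rw [h1, h2', h3]
  set d : ℝ := ((A - A).card : ℝ) with hddef
  set i : ℝ := ((Iset A).card : ℝ) with hidef
  have hbadR : d * i < 1/2 * (N^2 * R) := by
    rw [hrpow] at hbad; exact hbad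
  have hd0 : (0:ℝ) < d := by rw [hddef]; exact_mod_cast hD1
  have hi0 : (0:ℝ) < i := by rw [hidef]; exact_mod_cast hI1
  have hNd : N ≤ d := by
    rw [hNdef, hddef]; exact_mod_cast KonyaginAux.card_le_card_sub hA
  obtain ⟨ap, hap, hap0⟩ : ∃ x ∈ A, x ≠ 0 := by
    obtain ⟨a, ha, b, hb, hab⟩ := Finset.one_lt_card.1 (by omega : 1 < A.card)
    rcases eq_or_ne a 0 with rfl | h
    · exact ⟨b, hb, hab.symm⟩
    · exact ⟨a, ha, h⟩
  have hdi : d ≤ i := by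
    rw [hddef, hidef]; exact_mod_cast KonyaginAux.card_sub_le_Iset hap hap0
  -- Plünnecke–Ruzsa
  have hPRQ := Finset.pluennecke_ruzsa_inequality_nsmul_sub_nsmul_sub hA A 1 2
  have hsets : (1:ℕ) • A - (2:ℕ) • A = A - (A + A) := by rw [one_nsmul, two_nsmul]
  rw [hsets] at hPRQ
  norm_num at hPRQ
  set dA3 : ℝ := ((A - (A + A)).card : ℝ) with hdA3def
  have hPRR : dA3 ≤ (d / N)^3 * N := by
    rw [hdA3def, hddef, hNdef, hndef]
    have h := (NNRat.cast_le (K := ℝ)).2 hPRQ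
    push_cast at h
    exact h
  have hPR : dA3 * N^2 ≤ d^3 := by
    have hc : (d / N)^3 * N * N^2 = d^3 := by field_simp
    have := mul_le_mul_of_nonneg_right hPRR (by positivity : (0:ℝ) ≤ N^2)
    rw [hc] at this
    exact this
  -- growth step
  have hstep : ∀ θ : ZMod q, KonyaginAux.IsRatio A θ →
      (1 + θ = 0 ∨ KonyaginAux.IsRatio A (1 + θ)) := by
    intro θ hθ
    refine KonyaginAux.ratio_or_zero ?_
    have hsub : A - (1 + θ) • A ⊆ (A - A) - θ • A := by
      intro z hz
      obtain ⟨a, ha, t, ht, rfl⟩ := Finset.mem_sub.1 hz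
      obtain ⟨b, hb, rfl⟩ := Finset.mem_smul_finset.1 ht
      refine Finset.mem_sub.2 ⟨a - b, Finset.mem_sub.2 ⟨a, ha, b, hb, rfl⟩,
        θ * b, Finset.mem_smul_finset.2 ⟨b, hb, rfl⟩, ?_⟩
      rw [smul_eq_mul]; ring
    have h1 : (A - (1+θ) • A).card ≤ ((A - A) - θ • A).card := Finset.card_le_card hsub
    have h2 := Finset.ruzsa_triangle_inequality_sub_sub_sub (A - A) A (θ • A)
    rw [KonyaginAux.card_sub_comm (θ • A) A, KonyaginAux.sub_sub_eq] at h2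
    have hTi : ((A - θ • A).card : ℝ) ≤ i := by
      rw [hidef]; exact_mod_cast KonyaginAux.card_ratio_le hθ
    have hr1 : ((A - (1+θ) • A).card : ℝ) * N ≤ dA3 * ((A - θ • A).card : ℝ) := by
      calc ((A - (1+θ) • A).card : ℝ) * N ≤ (((A - A) - θ • A).card : ℝ) * N := by
            have : ((A - (1+θ) • A).card : ℝ) ≤ (((A - A) - θ • A).card : ℝ) := by
              exact_mod_cast h1
            exact mul_le_mul_of_nonneg_right this hN0.le
        _ ≤ dA3 * ((A - θ • A).card : ℝ) := by
            rw [hdA3def, hNdef, hndef]; exact_mod_cast h2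
    set t' : ℝ := ((A - (1+θ) • A).card : ℝ) with ht'def
    set tθ : ℝ := ((A - θ • A).card : ℝ) with htθdef
    have htθ0 : (0:ℝ) ≤ tθ := by rw [htθdef]; positivity
    have hd2 : d * d ≤ d * i := mul_le_mul_of_nonneg_left hdi hd0.le
    have s1 : t' * N * N^2 ≤ (dA3 * tθ) * N^2 :=
      mul_le_mul_of_nonneg_right hr1 (by positivity)
    have s3 : (dA3 * N^2) * tθ ≤ d^3 * tθ := mul_le_mul_of_nonneg_right hPR htθ0
    have s4 : d^3 * tθ ≤ d^3 * i := mul_le_mul_of_nonneg_left hTi (by positivity)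
    have s5 : d^3 * i ≤ (d*i) * (d*i) := by
      nlinarith [mul_le_mul_of_nonneg_right hd2 (mul_nonneg hd0.le hi0.le)]
    have s6 : (d*i) * (d*i) < (1/2*(N^2*R)) * (1/2*(N^2*R)) :=
      mul_self_lt_mul_self (by positivity) hbadR
    have s7 : (1/2*(N^2*R)) * (1/2*(N^2*R)) = N^5 / 4 := by
      linear_combination (N^4/4) * hR2
    have s8 : t' * N^3 < N^5/4 := by
      calc t' * N^3 = t' * N * N^2 := by ring
        _ ≤ (dA3 * tθ) * N^2 := s1
        _ = (dA3 * N^2) * tθ := by ring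
        _ ≤ d^3 * tθ := s3
        _ ≤ d^3 * i := s4
        _ ≤ (d*i)*(d*i) := s5
        _ < N^5/4 := by rw [← s7]; exact s6
    have hfinR : t' < N * N := by
      nlinarith [s8, hN0, hN2, mul_pos (mul_pos hN0 hN0) hN0]
    have : ((A - (1+θ) • A).card : ℝ) < ((A.card * A.card : ℕ) : ℝ) := by
      rw [← ht'def]
      push_cast
      rw [← hndef, ← hNdef]
      exact hfinR
    exact_mod_cast this
  -- every nonzero element is a ratio
  have hall : ∀ k : ℕ, ((k : ZMod q) = 0 ∨ KonyaginAux.IsRatio A (k : ZMod q)) := by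
    intro k
    induction k with
    | zero => exact Or.inl (by simp)
    | succ m ih =>
      have hc : ((m + 1 : ℕ) : ZMod q) = 1 + (m : ZMod q) := by push_cast; ring
      rcases ih with h0 | hr
      · right
        rw [hc, h0, add_zero]
        exact KonyaginAux.isRatio_one (by omega)
      · rw [hc]
        exact hstep _ hr
  have hratio_all : ∀ θ : ZMod q, θ ≠ 0 → KonyaginAux.IsRatio A θ := by
    intro θ hθ0
    obtain ⟨k, rfl⟩ := ZMod.natCast_zmod_surjective θ
    rcases hall k with h0 | hr
    · exact absurd h0 hθ0
    · exact hr
  -- the global quadruple count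
  set Θ : (ZMod q × ZMod q) × (ZMod q × ZMod q) → ZMod q :=
      fun pq => (pq.1.1 - pq.2.1) / (pq.1.2 - pq.2.2) with hΘdef
  set S4 := ((A ×ˢ A) ×ˢ (A ×ˢ A)).filter
      (fun pq => pq.1.2 ≠ pq.2.2) with hS4def
  have hfib : ∀ θ : ZMod q, θ ≠ 0 →
      N^2 * R ≤ ((S4.filter (fun pq => Θ pq = θ)).card : ℝ) := by
    intro θ hθ0
    have hrθ := hratio_all θ hθ0
    set ψ : ZMod q × ZMod q → ZMod q := fun p => p.1 - θ * p.2 with hψdef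
    have hmaps : ∀ p ∈ A ×ˢ A, ψ p ∈ A - θ • A := by
      intro p hp
      obtain ⟨h1', h2'⟩ := Finset.mem_product.1 hp
      exact Finset.mem_sub.2 ⟨p.1, h1', θ * p.2, Finset.mem_smul_finset.2 ⟨p.2, h2', rfl⟩, rfl⟩
    have hCS := KonyaginAux.cs_energy (A ×ˢ A) (A - θ • A) ψ hmaps
    have hsplit := KonyaginAux.energy_split (A ×ˢ A) ψ
    set Uc : ℝ := ((((A ×ˢ A) ×ˢ (A ×ˢ A)).filter
        fun pq => ψ pq.1 = ψ pq.2).card : ℝ) with hUcdef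
    set Vc : ℝ := ((((A ×ˢ A) ×ˢ (A ×ˢ A)).filter
        fun pq => ψ pq.1 = ψ pq.2 ∧ pq.1 ≠ pq.2).card : ℝ) with hVcdef
    have hVsub : (((A ×ˢ A) ×ˢ (A ×ˢ A)).filter
        fun pq => ψ pq.1 = ψ pq.2 ∧ pq.1 ≠ pq.2) ⊆ S4.filter (fun pq => Θ pq = θ) := by
      intro pq hpq
      have hmem := (Finset.mem_filter.1 hpq).1
      have hψeq : ψ pq.1 = ψ pq.2 := (Finset.mem_filter.1 hpq).2.1
      have hne : pq.1 ≠ pq.2 := (Finset.mem_filter.1 hpq).2.2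
      have hψeq' : pq.1.1 - θ * pq.1.2 = pq.2.1 - θ * pq.2.2 := hψeq
      have hbb : pq.1.2 ≠ pq.2.2 := by
        intro hb
        apply hne
        have h1 : pq.1.1 = pq.2.1 := by
          rw [hb] at hψeq'
          exact sub_left_inj.mp hψeq'
        exact Prod.ext h1 hb
      refine Finset.mem_filter.2 ⟨Finset.mem_filter.2 ⟨hmem, hbb⟩, ?_⟩
      show (pq.1.1 - pq.2.1) / (pq.1.2 - pq.2.2) = θ
      have hdd : pq.1.1 - pq.2.1 = θ * (pq.1.2 - pq.2.2) := by linear_combination hψeq'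
      rw [hdd, mul_div_assoc, div_self (sub_ne_zero.2 hbb), mul_one]
    have hVF : Vc ≤ ((S4.filter (fun pq => Θ pq = θ)).card : ℝ) := by
      rw [hVcdef]; exact_mod_cast Finset.card_le_card hVsub
    have hsprod : ((A ×ˢ A).card : ℝ) = N^2 := by
      rw [Finset.card_product, hNdef, hndef]; push_cast; ring
    have hTi : ((A - θ • A).card : ℝ) ≤ i := by
      rw [hidef]; exact_mod_cast KonyaginAux.card_ratio_le hrθ
    have hT0 : (0:ℝ) < ((A - θ • A).card : ℝ) := by
      have : (A - θ • A).Nonempty := hA.sub (hA.smul_finset)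
      exact_mod_cast Finset.card_pos.2 this
    have hiNR : i < N * R / 2 := by
      have h1 : N * i ≤ d * i := mul_le_mul_of_nonneg_right hNd hi0.le
      nlinarith [hbadR, hN0]
    have hTNR : ((A - θ • A).card : ℝ) < N * R / 2 := lt_of_le_of_lt hTi hiNR
    have hN4 : N^4 ≤ ((A - θ • A).card : ℝ) * Uc := by
      calc N^4 = (N^2)^2 := by ring
        _ = (((A ×ˢ A).card : ℝ))^2 := by rw [hsprod]
        _ ≤ _ := hCS
    have hsplitR : Uc = N^2 + Vc := by
      rw [hUcdef, hVcdef, hsplit]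
      push_cast
      rw [Finset.card_product]
      push_cast
      rw [← hndef, ← hNdef]
      ring
    have hVc0 : (0:ℝ) ≤ Vc := by rw [hVcdef]; positivity
    have hUc0 : (0:ℝ) < Uc := by rw [hsplitR]; positivity
    have hUcR : 2 * (N^2 * R) < Uc := by
      have h1 : ((A - θ • A).card : ℝ) * Uc < (N*R/2) * Uc :=
        mul_lt_mul_of_pos_right hTNR hUc0
      have h2 : N^4 < (N*R/2) * Uc := lt_of_le_of_lt hN4 h1
      by_contra hcon
      push_neg at hcon
      have h3 : (N*R/2) * Uc ≤ (N*R/2) * (2*(N^2*R)) :=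
        mul_le_mul_of_nonneg_left hcon (by positivity)
      have he : (N*R/2) * (2*(N^2*R)) = N^4 := by
        linear_combination (N^3) * hR2
      linarith
    have haux : N^2 ≤ N^2 * R := by nlinarith [hR1, sq_nonneg N]
    linarith [hVF, hsplitR, hUcR, haux]
  -- sum the fibers
  have hSsum : S4.card = ∑ θ ∈ (Finset.univ : Finset (ZMod q)),
      (S4.filter fun pq => Θ pq = θ).card :=
    Finset.card_eq_sum_card_fiberwise (fun x _ => Finset.mem_univ _)
  have hS4le : (S4.card : ℝ) ≤ N^4 := by
    have h1 : S4.card ≤ ((A ×ˢ A) ×ˢ (A ×ˢ A)).card := Finset.card_filter_le _ _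
    have h2 : ((A ×ˢ A) ×ˢ (A ×ˢ A)).card = (n*n)*(n*n) := by
      simp [Finset.card_product, hndef]
    calc (S4.card : ℝ) ≤ (((n*n)*(n*n) : ℕ) : ℝ) := by exact_mod_cast h1.trans_eq h2
      _ = N^4 := by rw [hNdef]; push_cast; ring
  have herase : ((Finset.univ.erase (0 : ZMod q)).card : ℝ) = (q : ℝ) - 1 := by
    have hc : (Finset.univ.erase (0 : ZMod q)).card = q - 1 := by
      rw [Finset.card_erase_of_mem (Finset.mem_univ _), Finset.card_univ, ZMod.card]
    rw [hc, Nat.cast_sub hq.one_lt.le]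
    norm_num
  have hlower : ((q:ℝ) - 1) * (N^2*R) ≤ (S4.card : ℝ) := by
    have h1 : ∑ θ ∈ Finset.univ.erase (0:ZMod q),
        ((S4.filter fun pq => Θ pq = θ).card : ℝ)
        ≤ ∑ θ ∈ (Finset.univ : Finset (ZMod q)),
          ((S4.filter fun pq => Θ pq = θ).card : ℝ) :=
      Finset.sum_le_sum_of_subset_of_nonneg (Finset.erase_subset _ _)
        (fun _ _ _ => Nat.cast_nonneg _)
    have h2 : ((Finset.univ.erase (0:ZMod q)).card) • (N^2*R)
        ≤ ∑ θ ∈ Finset.univ.erase (0:ZMod q),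
          ((S4.filter fun pq => Θ pq = θ).card : ℝ) :=
      Finset.card_nsmul_le_sum _ _ _ (fun x hx => hfib x (Finset.ne_of_mem_erase hx))
    have h3 : (∑ θ ∈ (Finset.univ : Finset (ZMod q)),
        ((S4.filter fun pq => Θ pq = θ).card : ℝ)) = (S4.card : ℝ) := by
      rw [hSsum]; push_cast; ring
    rw [nsmul_eq_mul, herase] at h2
    linarith
  clear hfib hSsum
  clear_value S4 Θ
  clear_value n N R d i dA3
  have hq2 : N^2 ≤ (q:ℝ) - 1 := by
    have hs : (q:ℝ) ^ ((1:ℝ)/2) * (q:ℝ) ^ ((1:ℝ)/2) = (q:ℝ) := by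
      rw [← Real.rpow_add (by exact_mod_cast hq.pos)]
      norm_num
    have hNq : N^2 < (q:ℝ) := by
      have h := mul_lt_mul'' hcard hcard hN0.le hN0.le
      rw [hs] at h
      rw [pow_two]
      exact h
    have hnq : n^2 < q := by
      have : ((n^2 : ℕ) : ℝ) < (q:ℝ) := by push_cast; rw [← hNdef]; exact hNq
      exact_mod_cast this
    have hq1 : n^2 + 1 ≤ q := hnq
    have : ((n^2 + 1 : ℕ) : ℝ) ≤ (q:ℝ) := by exact_mod_cast hq1
    push_cast at this
    rw [← hNdef] at this
    linarith
  have hfin : N^2 * (N^2*R) ≤ N^4 :=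
    le_trans (mul_le_mul_of_nonneg_right hq2 (by positivity)) (hlower.trans hS4le)
  nlinarith [hfin, hR2, hR1, hN2, hN0, mul_self_nonneg (R - 1), pow_pos hN0 4]
end

section
/- Let q be a prime, F = ℤ/qℤ, and let A be a subset of F with |A| > |F|^{1/2}. Then |I(A)| ≥ |F|/2. -/
open Finset

section aux

set_option linter.unusedSectionVars false

variable {K : Type*} [Field K] [Fintype K] [DecidableEq K]

/-- Cauchy–Schwarz: `|B|² ≤ |image| * |collision pairs|`. -/
private lemma cs_fiber (B : Finset (K × K)) (f : K × K → K) :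
    B.card ^ 2 ≤ (B.image f).card *
      (((B ×ˢ B).filter (fun p => f p.1 = f p.2)).card) := by
  classical
  set S := B.image f with hS
  have hsum : B.card = ∑ x ∈ S, (B.filter (fun p => f p = x)).card :=
    card_eq_sum_card_fiberwise (fun p hp => mem_image_of_mem _ hp)
  have hE : ((B ×ˢ B).filter (fun p => f p.1 = f p.2)).card
      = ∑ x ∈ S, ((B.filter (fun p => f p = x)).card) ^ 2 := by
    have hset : (B ×ˢ B).filter (fun p => f p.1 = f p.2)
        = S.biUnion (fun x => (B.filter (fun p => f p = x)) ×ˢ (B.filter (fun p => f p = x))) := by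
      ext p
      simp only [mem_filter, mem_product, mem_biUnion, mem_image, hS]
      constructor
      · rintro ⟨⟨h1, h2⟩, h3⟩
        exact ⟨f p.1, ⟨p.1, h1, rfl⟩, ⟨h1, rfl⟩, ⟨h2, h3.symm⟩⟩
      · rintro ⟨x, _, ⟨h1, hx1⟩, ⟨h2, hx2⟩⟩
        exact ⟨⟨h1, h2⟩, by rw [hx1, hx2]⟩
    rw [hset, card_biUnion]
    · exact Finset.sum_congr rfl (fun x _ => by rw [card_product, sq])
    · intro x hx y hy hxy
      rw [Function.onFun, disjoint_left]
      rintro p hp hq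
      simp only [mem_product, mem_filter] at hp hq
      exact hxy (hp.1.2 ▸ hq.1.2 ▸ rfl)
  have hcs : (∑ x ∈ S, (B.filter (fun p => f p = x)).card) ^ 2
      ≤ S.card * ∑ x ∈ S, ((B.filter (fun p => f p = x)).card) ^ 2 := by
    have := sum_mul_sq_le_sq_mul_sq (R := ℕ) S
      (fun x => (B.filter (fun p => f p = x)).card) 1
    simpa [mul_comm] using this
  calc B.card ^ 2 = (∑ x ∈ S, (B.filter (fun p => f p = x)).card) ^ 2 := by rw [hsum]
    _ ≤ S.card * ∑ x ∈ S, ((B.filter (fun p => f p = x)).card) ^ 2 := hcs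
    _ = S.card * ((B ×ˢ B).filter (fun p => f p.1 = f p.2)).card := by rw [hE]

/-- The energy of the map `(a,b) ↦ a + ξ b`, as a filtered set of pairs of pairs. -/
private def Eset (A : Finset K) (ξ : K) : Finset ((K × K) × (K × K)) :=
  ((A ×ˢ A) ×ˢ (A ×ˢ A)).filter (fun p => p.1.1 + ξ * p.1.2 = p.2.1 + ξ * p.2.2)

/-- For `ξ ≠ 0`, the energy splits into the diagonal and quadruples determining `ξ`. -/
private lemma sum_Eset_le (A : Finset K) :
    ∑ ξ ∈ (univ : Finset K).erase 0, (Eset A ξ).card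
      ≤ ((univ : Finset K).erase 0).card * A.card ^ 2
        + (A.card * A.card - A.card) ^ 2 := by
  classical
  set B := A ×ˢ A with hB
  set Q : K → Finset ((K × K) × (K × K)) := fun ξ =>
    (B ×ˢ B).filter (fun p => p.1.2 ≠ p.2.2 ∧ ξ * (p.1.2 - p.2.2) = p.2.1 - p.1.1) with hQ
  have hsplit : ∀ ξ ∈ (univ : Finset K).erase 0,
      (Eset A ξ).card ≤ A.card ^ 2 + (Q ξ).card := by
    intro ξ hξ
    have hξ0 : ξ ≠ 0 := (mem_erase.1 hξ).1
    have hsub : Eset A ξ ⊆ ((B ×ˢ B).filter (fun p => p.1 = p.2)) ∪ Q ξ := by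
      intro p hp
      simp only [Eset, mem_filter, hQ] at hp
      rcases hp with ⟨hmem, heq⟩
      rcases eq_or_ne p.1.2 p.2.2 with h | h
      · refine mem_union_left _ (mem_filter.2 ⟨hmem, ?_⟩)
        have : p.1.1 = p.2.1 := by
          have := heq
          rw [h] at this
          exact add_right_cancel this
        exact Prod.ext this h
      · refine mem_union_right _ (mem_filter.2 ⟨hmem, h, by ring_nf; linear_combination heq⟩)
    have hdiag : ((B ×ˢ B).filter (fun p => p.1 = p.2)).card = A.card ^ 2 := by
      have : (B ×ˢ B).filter (fun p => p.1 = p.2) = B.image (fun b => (b, b)) := by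
        ext p
        simp only [mem_filter, mem_product, mem_image]
        constructor
        · rintro ⟨⟨h1, h2⟩, h3⟩
          exact ⟨p.1, h1, by rw [show ((p.1, p.1) : (K×K)×(K×K)) = (p.1, p.2) from by rw [h3]]⟩
        · rintro ⟨b, hb, rfl⟩
          exact ⟨⟨hb, hb⟩, rfl⟩
      rw [this, card_image_of_injective _ (fun a b h => congrArg Prod.fst h),
        hB, card_product, sq]
    calc (Eset A ξ).card ≤ (((B ×ˢ B).filter (fun p => p.1 = p.2)) ∪ Q ξ).card :=
          card_le_card hsub
      _ ≤ ((B ×ˢ B).filter (fun p => p.1 = p.2)).card + (Q ξ).card := card_union_le _ _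
      _ = A.card ^ 2 + (Q ξ).card := by rw [hdiag]
  have hQsum : ∑ ξ ∈ (univ : Finset K).erase 0, (Q ξ).card
      ≤ (A.card * A.card - A.card) ^ 2 := by
    have hdisj : (((univ : Finset K).erase 0) : Set K).PairwiseDisjoint Q := by
      intro x hx y hy hxy
      show Disjoint (Q x) (Q y)
      rw [Finset.disjoint_left]
      intro p hp hp'
      simp only [hQ, mem_filter] at hp hp'
      apply hxy
      have hne : p.1.2 - p.2.2 ≠ 0 := sub_ne_zero.2 hp.2.1
      have := hp.2.2.trans hp'.2.2.symm
      exact mul_right_cancel₀ hne this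
    rw [← card_biUnion hdisj]
    have hsub : ((univ : Finset K).erase 0).biUnion Q ⊆
        ((B ×ˢ B).filter (fun p => p.1.2 ≠ p.2.2 ∧ p.1.1 ≠ p.2.1)) := by
      intro p hp
      rcases mem_biUnion.1 hp with ⟨ξ, hξ, hpQ⟩
      simp only [hQ, mem_filter] at hpQ
      refine mem_filter.2 ⟨hpQ.1, hpQ.2.1, ?_⟩
      intro hcontra
      have hξ0 : ξ ≠ 0 := (mem_erase.1 hξ).1
      have h1 : ξ * (p.1.2 - p.2.2) = 0 := by rw [hpQ.2.2, hcontra, sub_self]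
      rcases mul_eq_zero.1 h1 with h | h
      · exact hξ0 h
      · exact hpQ.2.1 (sub_eq_zero.1 h)
    refine (card_le_card hsub).trans ?_
    have hWcard : ((B ×ˢ B).filter (fun p => p.1.2 ≠ p.2.2 ∧ p.1.1 ≠ p.2.1)).card
        = (A.offDiag ×ˢ A.offDiag).card := by
      apply Finset.card_nbij' (fun p => ((p.1.1, p.2.1), (p.1.2, p.2.2)))
        (fun p => ((p.1.1, p.2.1), (p.1.2, p.2.2)))
      · intro p hp
        simp only [mem_coe, hB, mem_filter, mem_product] at hp
        simp only [mem_coe, mem_product, mem_offDiag]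
        exact ⟨⟨hp.1.1.1, hp.1.2.1, hp.2.2⟩, ⟨hp.1.1.2, hp.1.2.2, hp.2.1⟩⟩
      · intro p hp
        simp only [mem_coe, mem_product, mem_offDiag] at hp
        simp only [mem_coe, hB, mem_filter, mem_product]
        exact ⟨⟨⟨hp.1.1, hp.2.1⟩, hp.1.2.1, hp.2.2.1⟩, hp.2.2.2, hp.1.2.2⟩
      · intro p hp; rfl
      · intro p hp; rfl
    rw [hWcard, card_product, offDiag_card, sq]
  calc ∑ ξ ∈ (univ : Finset K).erase 0, (Eset A ξ).card
      ≤ ∑ ξ ∈ (univ : Finset K).erase 0, (A.card ^ 2 + (Q ξ).card) :=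
        Finset.sum_le_sum hsplit
    _ = ((univ : Finset K).erase 0).card * A.card ^ 2
        + ∑ ξ ∈ (univ : Finset K).erase 0, (Q ξ).card := by
        rw [Finset.sum_add_distrib, Finset.sum_const, smul_eq_mul]
    _ ≤ _ := by exact Nat.add_le_add_left hQsum _

end aux

/-- **Theorem 3 (Konyagin).** If `q` is prime and `A ⊆ ℤ/qℤ` satisfies
`|A| > |F|^(1/2)`, then `|I(A)| ≥ |F|/2`. -/
theorem I_card_ge_half_field (q : ℕ) (hq : q.Prime) (A : Finset (ZMod q))
    (hA : (q : ℝ) ^ ((1 : ℝ) / 2) < (A.card : ℝ)) :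
    (q : ℝ) / 2 ≤ ((Iset A).card : ℝ) := by
  haveI : Fact q.Prime := ⟨hq⟩
  set n := A.card with hn
  -- `q < n * n`
  have hq0 : (0 : ℝ) ≤ (q : ℝ) := Nat.cast_nonneg q
  have hrpow : (q : ℝ) ^ ((1 : ℝ) / 2) * (q : ℝ) ^ ((1 : ℝ) / 2) = q := by
    rw [← Real.rpow_add' hq0 (by norm_num)]
    norm_num
  have hqnR : (q : ℝ) < (n : ℝ) * n := by
    calc (q : ℝ) = (q : ℝ) ^ ((1 : ℝ) / 2) * (q : ℝ) ^ ((1 : ℝ) / 2) := hrpow.symm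
      _ < (n : ℝ) * n := by
          apply mul_lt_mul' (le_of_lt hA) hA (Real.rpow_nonneg hq0 _)
          exact lt_of_le_of_lt (Real.rpow_nonneg hq0 _) hA
  have hqn : q < n * n := by exact_mod_cast hqnR
  have hq2 : 2 ≤ q := hq.two_le
  have hn2 : 2 ≤ n := by nlinarith
  have hnq : n ≤ q := by
    have := Finset.card_le_univ A
    rwa [ZMod.card] at this
  -- pick ξ ≠ 0 minimizing the energy
  have hcarderase : ((univ : Finset (ZMod q)).erase 0).card = q - 1 := by
    rw [Finset.card_erase_of_mem (mem_univ 0), Finset.card_univ, ZMod.card]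
  have hne : ((univ : Finset (ZMod q)).erase 0).Nonempty := by
    rw [← Finset.card_pos, hcarderase]; omega
  obtain ⟨ξ, hξmem, hξmin⟩ := Finset.exists_min_image _ (fun ξ => (Eset A ξ).card) hne
  have hξ0 : ξ ≠ 0 := (Finset.mem_erase.1 hξmem).1
  -- averaging bound
  have havg : (q - 1) * (Eset A ξ).card ≤ (q - 1) * n ^ 2 + (n * n - n) ^ 2 := by
    have h1 : ((univ : Finset (ZMod q)).erase 0).card • (Eset A ξ).card
        ≤ ∑ ζ ∈ (univ : Finset (ZMod q)).erase 0, (Eset A ζ).card :=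
      Finset.card_nsmul_le_sum _ _ _ (fun ζ hζ => hξmin ζ hζ)
    have h2 := sum_Eset_le A
    rw [hcarderase] at h1 h2
    calc (q - 1) * (Eset A ξ).card = (q-1) • (Eset A ξ).card := by rw [smul_eq_mul]
      _ ≤ _ := le_trans h1 h2
  -- Cauchy–Schwarz
  have hBcard : (A ×ˢ A).card = n * n := by rw [card_product]
  have hcs : (n * n) ^ 2 ≤ ((A ×ˢ A).image (fun p => p.1 + ξ * p.2)).card * (Eset A ξ).card := by
    have := cs_fiber (A ×ˢ A) (fun p => p.1 + ξ * p.2)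
    rwa [hBcard] at this
  -- the image injects into Iset A
  have himg : ((A ×ˢ A).image (fun p => p.1 + ξ * p.2)).card ≤ (Iset A).card := by
    -- pigeonhole: ξ = (c-a)/(b-d) with a,b,c,d ∈ A, b ≠ d
    obtain ⟨p₁, hp₁, p₂, hp₂, hpne, hpeq⟩ :=
      Finset.exists_ne_map_eq_of_card_lt_of_maps_to
        (show (univ : Finset (ZMod q)).card < (A ×ˢ A).card by
          rw [Finset.card_univ, ZMod.card, hBcard]; exact hqn)
        (fun p _ => Finset.mem_univ (p.1 + ξ * p.2))
    obtain ⟨a, b⟩ := p₁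
    obtain ⟨c, d⟩ := p₂
    simp only [Finset.mem_product] at hp₁ hp₂
    have hbd : b ≠ d := by
      intro h
      subst h
      have : a = c := by simpa using hpeq
      exact hpne (by rw [this])
    have hδ : (b - d : ZMod q) ≠ 0 := sub_ne_zero.2 hbd
    have hkey : ξ * (b - d) = c - a := by linear_combination hpeq
    apply Finset.card_le_card_of_injOn (fun x => (b - d) * x)
    · intro x hx
      obtain ⟨p, hp, rfl⟩ := Finset.mem_image.1 hx
      obtain ⟨u, v⟩ := p
      simp only [Finset.mem_product] at hp
      simp only [Finset.mem_coe, Iset, Finset.mem_image]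
      refine ⟨(u, b, d, v, c, a), ?_, ?_⟩
      · simp only [Finset.mem_product]
        exact ⟨hp.1, hp₁.2, hp₂.2, hp.2, hp₂.1, hp₁.1⟩
      · simp only
        linear_combination (-v) * hkey
    · intro x _ y _ hxy
      exact mul_left_cancel₀ hδ hxy
  -- final arithmetic
  set e := (Eset A ξ).card with he
  set s := ((A ×ˢ A).image (fun p => p.1 + ξ * p.2)).card with hs
  set i := (Iset A).card with hi
  have he1 : 1 ≤ e := by
    by_contra h
    push_neg at h
    interval_cases e
    simp at hcs
    nlinarith
  have hq2i : q ≤ 2 * i := by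
    -- work in ℤ
    have havgZ : ((q : ℤ) - 1) * e ≤ ((q : ℤ) - 1) * n ^ 2 + ((n : ℤ) * n - n) ^ 2 := by
      have h1 : (1 : ℕ) ≤ q := le_trans (by norm_num) hq2
      have h2 : n ≤ n * n := Nat.le_mul_of_pos_left n (by omega)
      zify [h1, h2] at havg
      exact havg
    have hcsZ : ((n : ℤ) * n) ^ 2 ≤ (s : ℤ) * e := by exact_mod_cast hcs
    have key : (q : ℤ) * (((q : ℤ) - 1) * n ^ 2 + ((n : ℤ) * n - n) ^ 2)
        ≤ ((q : ℤ) - 1) * (2 * ((n : ℤ) * n) ^ 2) := by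
      have hqnZ : (q : ℤ) < (n : ℤ) * n := by exact_mod_cast hqn
      have hn2Z : (2 : ℤ) ≤ n := by exact_mod_cast hn2
      have hq2Z : (2 : ℤ) ≤ q := by exact_mod_cast hq2
      have h3 : (q : ℤ) + 1 ≤ (n : ℤ) * n := by linarith
      have k1 : ((q:ℤ) + 1) * ((q:ℤ) - 2) ≤ ((n:ℤ) * n) * ((q:ℤ) - 2) :=
        mul_le_mul_of_nonneg_right h3 (by linarith)
      have k2 : 2 * (q:ℤ) * 2 ≤ 2 * (q:ℤ) * n :=
        mul_le_mul_of_nonneg_left hn2Z (by linarith)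
      have key0 : (q:ℤ) * (((q:ℤ)-1) + ((n:ℤ)-1)^2) ≤ 2*((n:ℤ)*n)*((q:ℤ)-1) := by
        nlinarith [k1, k2]
      calc (q : ℤ) * (((q : ℤ) - 1) * n ^ 2 + ((n : ℤ) * n - n) ^ 2)
          = (n:ℤ)^2 * ((q:ℤ) * (((q:ℤ)-1) + ((n:ℤ)-1)^2)) := by ring
        _ ≤ (n:ℤ)^2 * (2*((n:ℤ)*n)*((q:ℤ)-1)) :=
            mul_le_mul_of_nonneg_left key0 (by positivity)
        _ = ((q : ℤ) - 1) * (2 * ((n : ℤ) * n) ^ 2) := by ring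
    have step1 : (q : ℤ) * e ≤ 2 * ((n : ℤ) * n) ^ 2 := by
      have h := mul_le_mul_of_nonneg_left havgZ (show (0:ℤ) ≤ q by positivity)
      have h2 : ((q:ℤ) - 1) * ((q : ℤ) * e) ≤ ((q : ℤ) - 1) * (2 * ((n : ℤ) * n) ^ 2) := by
        calc ((q:ℤ) - 1) * ((q : ℤ) * e) = (q : ℤ) * (((q:ℤ) - 1) * e) := by ring
          _ ≤ (q : ℤ) * (((q : ℤ) - 1) * n ^ 2 + ((n : ℤ) * n - n) ^ 2) := h
          _ ≤ _ := key
      have hq1 : (0 : ℤ) < (q : ℤ) - 1 := by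
        have : (2 : ℤ) ≤ q := by exact_mod_cast hq2
        linarith
      exact le_of_mul_le_mul_left h2 hq1
    have step2 : (q : ℤ) * e ≤ (2 * s) * e := by
      calc (q : ℤ) * e ≤ 2 * ((n : ℤ) * n) ^ 2 := step1
        _ ≤ 2 * ((s : ℤ) * e) := by linarith [hcsZ]
        _ = (2 * s) * e := by ring
    have step3 : (q : ℤ) ≤ 2 * s := by
      have heZ : (0 : ℤ) < e := by exact_mod_cast he1
      exact le_of_mul_le_mul_right step2 heZ
    have : (q : ℤ) ≤ 2 * i := by
      have hsi : (s : ℤ) ≤ i := by exact_mod_cast himg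
      linarith
    exact_mod_cast this
  rw [div_le_iff₀ (by norm_num : (0:ℝ) < 2)]
  calc (q : ℝ) ≤ 2 * i := by exact_mod_cast hq2i
    _ = i * 2 := by ring
end

section
/- Let q be a prime, F = ℤ/qℤ, A ⊆ F, and let ξ ∈ F* = F \ {0}. If |S_ξ(A)| < |A|², then |I(A)| ≥ |S_ξ(A)|. -/
/-- `S_ξ(A) = {a + bξ : a, b ∈ A}`. -/
def Sset {q : ℕ} (A : Finset (ZMod q)) (ξ : ZMod q) : Finset (ZMod q) :=
  (A ×ˢ A).image fun p => p.1 + p.2 * ξ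

/-- **Lemma 1 (Konyagin).** Let `q` be prime, `A ⊆ ℤ/qℤ` and `ξ ∈ F*`. If
`|S_ξ(A)| < |A|²` then `|I(A)| ≥ |S_ξ(A)|`. -/
theorem I_card_ge_S_card (q : ℕ) (hq : q.Prime) (A : Finset (ZMod q))
    (ξ : ZMod q) (hξ : ξ ≠ 0) (h : (Sset A ξ).card < A.card ^ 2) :
    (Sset A ξ).card ≤ (Iset A).card := by
  haveI : Fact q.Prime := ⟨hq⟩
  have h2 : (Sset A ξ).card < (A ×ˢ A).card := by
    simpa [Finset.card_product, sq] using h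
  obtain ⟨p₁, hp₁, p₂, hp₂, hne, heq⟩ :=
    Finset.exists_ne_map_eq_of_card_lt_of_maps_to h2
      (fun p hp => Finset.mem_image_of_mem _ hp)
  simp only [Finset.mem_product] at hp₁ hp₂
  set c : ZMod q := p₁.2 - p₂.2 with hcdef
  have hc : c ≠ 0 := by
    intro hc0
    have h22 : p₁.2 = p₂.2 := sub_eq_zero.mp hc0
    have h11 : p₁.1 = p₂.1 := by
      have : p₁.1 + p₁.2 * ξ = p₂.1 + p₂.2 * ξ := heq
      rw [h22] at this
      exact add_right_cancel this
    exact hne (Prod.ext h11 h22)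
  have hkey : ξ * c = p₂.1 - p₁.1 := by
    have : p₁.1 + p₁.2 * ξ = p₂.1 + p₂.2 * ξ := heq
    rw [hcdef]; ring_nf; linear_combination this
  apply Finset.card_le_card_of_injOn (fun s => s * c)
  · intro s hs
    simp only [Finset.mem_coe, Sset, Finset.mem_image, Finset.mem_product] at hs
    obtain ⟨⟨x, y⟩, ⟨hx, hy⟩, rfl⟩ := hs
    simp only [Finset.mem_coe, Iset, Finset.mem_image]
    refine ⟨⟨x, p₁.2, p₂.2, y, p₂.1, p₁.1⟩, ?_, ?_⟩
    · simp only [Finset.mem_product]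
      exact ⟨hx, hp₁.2, hp₂.2, hy, hp₂.1, hp₁.1⟩
    · simp only
      rw [← hkey, hcdef]; ring
  · intro a _ b _ hab
    exact mul_right_cancel₀ hc hab
end

section
/- Let q be a prime, F = ℤ/qℤ, A ⊆ F, and let G be a nonempty subset of F* = F \ {0}. Then there exists ξ ∈ G such that |S_ξ(A)| ≥ |A|²·|G| / (|A|² + |G|). -/
open Finset
open scoped Combinatorics.Additive Pointwise

variable {q : ℕ}

/-- The "ξ-energy" of A. -/
def konE {q : ℕ} (A : Finset (ZMod q)) (ξ : ZMod q) : ℕ :=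
  (((A ×ˢ A) ×ˢ (A ×ˢ A)).filter
    fun x : (ZMod q × ZMod q) × ZMod q × ZMod q =>
      x.1.1 + x.2.1 * ξ = x.1.2 + x.2.2 * ξ).card

lemma Sset_eq (A : Finset (ZMod q)) (ξ : ZMod q) :
    Sset A ξ = A + A.image (· * ξ) := by
  ext x
  simp only [Sset, mem_image, mem_product, Finset.mem_add, Prod.exists]
  constructor
  · rintro ⟨a, b, ⟨ha, hb⟩, rfl⟩
    exact ⟨a, ha, b * ξ, ⟨b, hb, rfl⟩, rfl⟩
  · rintro ⟨a, ha, _, ⟨b, hb, rfl⟩, rfl⟩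
    exact ⟨a, b, ⟨ha, hb⟩, rfl⟩

lemma energy_eq [Fact (q.Prime)] (A : Finset (ZMod q)) {ξ : ZMod q} (hξ : ξ ≠ 0) :
    E[A, A.image (· * ξ)] = konE A ξ := by
  unfold Finset.addEnergy konE
  refine (Finset.card_nbij' (fun x => ((x.1.1, x.1.2), (x.2.1 * ξ⁻¹, x.2.2 * ξ⁻¹)))
    (fun x => ((x.1.1, x.1.2), (x.2.1 * ξ, x.2.2 * ξ))) ?_ ?_ ?_ ?_)
  · intro x hx; rcases x with ⟨⟨a₁, a₂⟩, b₁, b₂⟩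
    simp only [mem_coe, mem_filter, mem_product, mem_image] at hx ⊢
    obtain ⟨⟨⟨ha₁, ha₂⟩, ⟨c₁, hc₁, rfl⟩, ⟨c₂, hc₂, rfl⟩⟩, heq⟩ := hx
    refine ⟨⟨⟨ha₁, ha₂⟩, by simpa [mul_assoc, mul_inv_cancel₀ hξ] using hc₁,
      by simpa [mul_assoc, mul_inv_cancel₀ hξ] using hc₂⟩, ?_⟩
    simpa [mul_assoc, inv_mul_cancel₀ hξ] using heq
  · intro x hx; rcases x with ⟨⟨a₁, a₂⟩, b₁, b₂⟩
    simp only [mem_coe, mem_filter, mem_product, mem_image] at hx ⊢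
    obtain ⟨⟨⟨ha₁, ha₂⟩, hb₁, hb₂⟩, heq⟩ := hx
    exact ⟨⟨⟨ha₁, ha₂⟩, ⟨b₁, hb₁, rfl⟩, ⟨b₂, hb₂, rfl⟩⟩, heq⟩
  · rintro ⟨⟨a₁, a₂⟩, b₁, b₂⟩ hx
    simp [mul_assoc, inv_mul_cancel₀ hξ]
  · rintro ⟨⟨a₁, a₂⟩, b₁, b₂⟩ hx
    simp [mul_assoc, mul_inv_cancel₀ hξ]

/-- Cauchy–Schwarz step. -/
lemma CS [Fact (q.Prime)] (A : Finset (ZMod q)) {ξ : ZMod q} (hξ : ξ ≠ 0) :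
    A.card ^ 2 * A.card ^ 2 ≤ (Sset A ξ).card * konE A ξ := by
  have h := Finset.le_card_add_mul_addEnergy A (A.image (· * ξ))
  rwa [Finset.card_image_of_injective _ (mul_left_injective₀ hξ), energy_eq A hξ,
    ← Sset_eq] at h

lemma fiber_le [Fact (q.Prime)] (G : Finset (ZMod q)) (a₁ a₂ b₁ b₂ : ZMod q) :
    (G.filter fun ξ => a₁ + b₁ * ξ = a₂ + b₂ * ξ).card ≤
      if a₁ = a₂ ∧ b₁ = b₂ then G.card else 1 := by
  by_cases hb : b₁ = b₂
  · subst hb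
    by_cases ha : a₁ = a₂
    · simp only [ha, and_self, if_true]
      exact card_le_card (filter_subset _ _)
    · have h0 : (G.filter fun ξ => a₁ + b₁ * ξ = a₂ + b₁ * ξ) = ∅ :=
        filter_eq_empty_iff.2 fun ξ _ h => ha (add_right_cancel h)
      rw [if_neg (by tauto), h0, card_empty]
      norm_num
  · rw [if_neg (by tauto)]
    refine Finset.card_le_one.2 fun ξ hξ ξ' hξ' => ?_
    simp only [mem_filter] at hξ hξ'
    have h : (b₂ - b₁) * ξ = (b₂ - b₁) * ξ' := by linear_combination hξ'.2 - hξ.2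
    exact mul_left_cancel₀ (sub_ne_zero.2 (Ne.symm hb)) h

lemma sum_konE_le [Fact (q.Prime)] (A G : Finset (ZMod q)) :
    ∑ ξ ∈ G, konE A ξ ≤ A.card ^ 2 * G.card + A.card ^ 2 * A.card ^ 2 := by
  have hswap : ∑ ξ ∈ G, konE A ξ
      = ∑ x ∈ (A ×ˢ A) ×ˢ (A ×ˢ A),
          (G.filter fun ξ => x.1.1 + x.2.1 * ξ = x.1.2 + x.2.2 * ξ).card := by
    simp_rw [konE, card_filter]
    exact Finset.sum_comm
  rw [hswap]
  calc ∑ x ∈ (A ×ˢ A) ×ˢ (A ×ˢ A),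
          (G.filter fun ξ => x.1.1 + x.2.1 * ξ = x.1.2 + x.2.2 * ξ).card
      ≤ ∑ x ∈ (A ×ˢ A) ×ˢ (A ×ˢ A),
          (if x.1.1 = x.1.2 ∧ x.2.1 = x.2.2 then G.card else 1) :=
        sum_le_sum fun x _ => fiber_le G _ _ _ _
    _ = (((A ×ˢ A) ×ˢ (A ×ˢ A)).filter
            fun x => x.1.1 = x.1.2 ∧ x.2.1 = x.2.2).card * G.card
        + (((A ×ˢ A) ×ˢ (A ×ˢ A)).filter
            fun x => ¬(x.1.1 = x.1.2 ∧ x.2.1 = x.2.2)).card * 1 := by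
        rw [Finset.sum_ite, sum_const, sum_const, smul_eq_mul, smul_eq_mul]
    _ ≤ A.card ^ 2 * G.card + A.card ^ 2 * A.card ^ 2 := by
        refine Nat.add_le_add (Nat.mul_le_mul_right _ ?_) ?_
        · have : (((A ×ˢ A) ×ˢ (A ×ˢ A)).filter
              fun x => x.1.1 = x.1.2 ∧ x.2.1 = x.2.2).card ≤ (A ×ˢ A).card := by
            refine Finset.card_le_card_of_injOn (fun x => (x.1.1, x.2.1)) ?_ ?_
            · intro x hx; rcases x with ⟨⟨a₁, a₂⟩, b₁, b₂⟩
              simp only [mem_coe, mem_filter, mem_product] at hx ⊢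
              exact ⟨hx.1.1.1, hx.1.2.1⟩
            · rintro ⟨⟨a₁, a₂⟩, b₁, b₂⟩ hx ⟨⟨c₁, c₂⟩, d₁, d₂⟩ hy hxy
              simp only [mem_coe, mem_filter] at hx hy
              obtain ⟨rfl, rfl⟩ := hx.2
              obtain ⟨rfl, rfl⟩ := hy.2
              simp only [Prod.mk.injEq] at hxy
              simp [hxy.1, hxy.2]
          simpa [card_product, sq] using this
        · calc (((A ×ˢ A) ×ˢ (A ×ˢ A)).filter
                fun x => ¬(x.1.1 = x.1.2 ∧ x.2.1 = x.2.2)).card * 1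
              ≤ ((A ×ˢ A) ×ˢ (A ×ˢ A)).card := by
                rw [mul_one]; exact card_le_card (filter_subset _ _)
            _ = A.card ^ 2 * A.card ^ 2 := by simp [card_product]; ring

/-- **Lemma 2 (Konyagin).** Let `q` be prime, `A ⊆ ℤ/qℤ` and `G` a nonempty subset of
`F* = F \ {0}`. Then there is `ξ ∈ G` with `|S_ξ(A)| ≥ |A|²|G|/(|A|² + |G|)`. -/
theorem exists_xi_S_card_ge (q : ℕ) (hq : q.Prime) (A : Finset (ZMod q))
    (G : Finset (ZMod q)) (hG : G.Nonempty) (hG0 : (0 : ZMod q) ∉ G) :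
    ∃ ξ ∈ G, (A.card : ℝ) ^ 2 * (G.card : ℝ) / ((A.card : ℝ) ^ 2 + (G.card : ℝ))
      ≤ ((Sset A ξ).card : ℝ) := by
  haveI : Fact q.Prime := ⟨hq⟩
  obtain ⟨ξ, hξG, hmin⟩ := G.exists_min_image (konE A) hG
  have hξ0 : ξ ≠ 0 := fun h => hG0 (h ▸ hξG)
  refine ⟨ξ, hξG, ?_⟩
  -- sum bound gives: G.card * konE A ξ ≤ A.card^2 * G.card + A.card^4
  have hsum : G.card * konE A ξ ≤ A.card ^ 2 * G.card + A.card ^ 2 * A.card ^ 2 := by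
    calc G.card * konE A ξ = ∑ _ξ' ∈ G, konE A ξ := by rw [sum_const, smul_eq_mul]
      _ ≤ ∑ ξ' ∈ G, konE A ξ' := sum_le_sum fun ξ' hξ' => hmin ξ' hξ'
      _ ≤ _ := sum_konE_le A G
  have hcs := CS A hξ0
  -- move to ℝ
  have hg : (0 : ℝ) < G.card := by exact_mod_cast hG.card_pos
  have h1 : ((A.card : ℝ)) ^ 2 * (A.card : ℝ) ^ 2
      ≤ ((Sset A ξ).card : ℝ) * (konE A ξ : ℝ) := by exact_mod_cast hcs
  have h2 : (G.card : ℝ) * (konE A ξ : ℝ)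
      ≤ (A.card : ℝ) ^ 2 * (G.card : ℝ) + (A.card : ℝ) ^ 2 * (A.card : ℝ) ^ 2 := by
    exact_mod_cast hsum
  have hS : (0 : ℝ) ≤ ((Sset A ξ).card : ℝ) := by positivity
  rw [div_le_iff₀ (by positivity)]
  rcases eq_or_lt_of_le (sq_nonneg (A.card : ℝ)) with ha | ha
  · nlinarith
  · have F1 := mul_le_mul_of_nonneg_right h1 hg.le
    have F2 := mul_le_mul_of_nonneg_left h2 hS
    nlinarith
end

section
/- Let q be a prime, F = ℤ/qℤ, and let A be a nonempty subset of F* = F \ {0}. Define H := {s ∈ F : the number of pairs (a,b) ∈ A×A with s = a/b is at least |A|²/(5|A·A|)}, and let G be the multiplicative subgroup of F* generated by H. Then there is a coset G₁ of G in F* such that |A ∩ G₁| ≥ |A|/3. -/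
set_option maxHeartbeats 1000000

open scoped Pointwise

def Hset {q : ℕ} (A : Finset (ZMod q)) : Set (ZMod q) :=
  {s | (A.card : ℝ) ^ 2 / (5 * ((A * A).card : ℝ))
    ≤ (((A ×ˢ A).filter fun p => p.1 = s * p.2).card : ℝ)}

def Ggen {q : ℕ} (A : Finset (ZMod q)) : Subgroup (ZMod q)ˣ :=
  Subgroup.closure {u : (ZMod q)ˣ | (u : ZMod q) ∈ Hset A}

lemma fiber_sq_sum {α β : Type*} [DecidableEq α] [DecidableEq β] [Fintype β]
    (s : Finset α) (f : α → β) :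
    ((s ×ˢ s).filter fun p => f p.1 = f p.2).card
      = ∑ b : β, ((s.filter fun a => f a = b).card) ^ 2 := by
  rw [Finset.card_eq_sum_card_fiberwise (f := fun p => f p.1) (t := Finset.univ)
    (fun _ _ => Finset.mem_univ _)]
  refine Finset.sum_congr rfl fun b _ => ?_
  rw [sq, ← Finset.card_product]
  congr 1
  ext p
  simp only [Finset.mem_filter, Finset.mem_product]
  constructor
  · rintro ⟨⟨⟨h1, h2⟩, h3⟩, h4⟩
    exact ⟨⟨h1, h4⟩, h2, h3 ▸ h4⟩
  · rintro ⟨⟨h1, h2⟩, h3, h4⟩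
    exact ⟨⟨⟨h1, h3⟩, h2.trans h4.symm⟩, h2⟩

lemma card_swap_energy {α : Type*} [DecidableEq α] [CommMonoid α] (B C : Finset α) :
    (((B ×ˢ C) ×ˢ (B ×ˢ C)).filter fun p => p.1.1 * p.1.2 = p.2.1 * p.2.2).card
      = (((B ×ˢ C) ×ˢ (B ×ˢ C)).filter fun p => p.1.1 * p.2.2 = p.2.1 * p.1.2).card := by
  refine Finset.card_bij' (i := fun p _ => ((p.1.1, p.2.2), (p.2.1, p.1.2)))
    (j := fun p _ => ((p.1.1, p.2.2), (p.2.1, p.1.2))) ?_ ?_ ?_ ?_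
  · rintro ⟨⟨a, b⟩, ⟨c, d⟩⟩ hp
    simp only [Finset.mem_filter, Finset.mem_product] at hp ⊢
    tauto
  · rintro ⟨⟨a, b⟩, ⟨c, d⟩⟩ hp
    simp only [Finset.mem_filter, Finset.mem_product] at hp ⊢
    tauto
  · rintro ⟨⟨a, b⟩, ⟨c, d⟩⟩ _; rfl
  · rintro ⟨⟨a, b⟩, ⟨c, d⟩⟩ _; rfl

lemma split_lemma {ι : Type*} [Fintype ι] [DecidableEq ι] (f : ι → ℕ) (N : ℕ)
    (hN : ∑ i, f i = N) (hsmall : ∀ i, 3 * f i < N) :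
    ∃ S : Finset ι, N ≤ 3 * ∑ i ∈ S, f i ∧ 3 * ∑ i ∈ S, f i ≤ 2 * N := by
  classical
  set 𝒮 : Finset (Finset ι) := Finset.univ.filter (fun S => 3 * ∑ i ∈ S, f i ≤ 2 * N) with h𝒮
  have hne : 𝒮.Nonempty := ⟨∅, by simp [h𝒮]⟩
  obtain ⟨S, hS, hmax⟩ := Finset.exists_max_image 𝒮 (fun S => ∑ i ∈ S, f i) hne
  simp only [h𝒮, Finset.mem_filter, Finset.mem_univ, true_and] at hS
  refine ⟨S, ?_, hS⟩
  by_contra hlt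
  push_neg at hlt
  have hsplit : ∑ i ∈ S, f i + ∑ i ∈ Sᶜ, f i = N := by
    rw [← hN]; exact (Finset.sum_add_sum_compl S f)
  have hcomp : 0 < ∑ i ∈ Sᶜ, f i := by omega
  obtain ⟨i, hiS, hi⟩ : ∃ i ∈ Sᶜ, 0 < f i := by
    by_contra h
    push_neg at h
    have : ∑ i ∈ Sᶜ, f i = 0 := Finset.sum_eq_zero (fun i hi => by have := h i hi; omega)
    omega
  have hiS' : i ∉ S := by simpa using hiS
  have hnew : 3 * ∑ j ∈ insert i S, f j ≤ 2 * N := by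
    rw [Finset.sum_insert hiS']
    have := hsmall i
    omega
  have hmem : insert i S ∈ 𝒮 := by simp [h𝒮, hnew]
  have := hmax _ hmem
  rw [Finset.sum_insert hiS'] at this
  omega

/-- **Lemma 3 (Konyagin).** Let `q` be prime and `A` a nonempty subset of `F*`.
Then some coset `G₁` of `G` satisfies `|A ∩ G₁| ≥ |A|/3`. -/
theorem exists_coset_large_inter (q : ℕ) (hq : q.Prime) (A : Finset (ZMod q))
    (hA : A.Nonempty) (hA0 : (0 : ZMod q) ∉ A) :
    ∃ g : (ZMod q)ˣ,
      (A.card : ℝ) / 3 ≤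
        (((A : Set (ZMod q)) ∩
          {x | ∃ u ∈ Ggen A, x = ((g * u : (ZMod q)ˣ) : ZMod q)}).ncard : ℝ) := by
  classical
  haveI : Fact q.Prime := ⟨hq⟩
  set N := A.card with hNdef
  have hN1 : 1 ≤ N := Finset.card_pos.mpr hA
  set Q := (ZMod q)ˣ ⧸ Ggen A with hQdef
  haveI : Fintype Q := Fintype.ofFinite Q
  set φ : ZMod q → Q := fun x =>
    if h : x = 0 then (1 : Q) else (QuotientGroup.mk (Units.mk0 x h) : Q) with hφ
  have hφval : ∀ (x : ZMod q) (hx : x ≠ 0), φ x = (QuotientGroup.mk (Units.mk0 x hx) : Q) :=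
    fun x hx => by simp [hφ, hx]
  have hAne : ∀ a ∈ A, a ≠ 0 := fun a ha h => hA0 (h ▸ ha)
  by_cases hbig : ∃ t : Q, (N : ℝ) / 3 ≤ ((A.filter fun a => φ a = t).card : ℝ)
  · obtain ⟨t, ht⟩ := hbig
    have hpos : 0 < (A.filter fun a => φ a = t).card := by
      rcases Nat.eq_zero_or_pos (A.filter fun a => φ a = t).card with h | h
      · rw [h] at ht
        simp only [Nat.cast_zero] at ht
        have hN0 : (0:ℝ) < (N:ℝ) := by exact_mod_cast hN1
        linarith
      · exact h
    obtain ⟨a, ha⟩ := Finset.card_pos.mp hpos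
    rw [Finset.mem_filter] at ha
    obtain ⟨haA, hat⟩ := ha
    have ha0 : a ≠ 0 := hAne a haA
    refine ⟨Units.mk0 a ha0, le_trans ht ?_⟩
    have hsub : (↑(A.filter fun x => φ x = t) : Set (ZMod q)) ⊆
        ((A : Set (ZMod q)) ∩
          {x | ∃ u ∈ Ggen A, x = ((Units.mk0 a ha0 * u : (ZMod q)ˣ) : ZMod q)}) := by
      intro x hx
      simp only [Finset.coe_filter, Set.mem_setOf_eq] at hx
      obtain ⟨hxA, hxt⟩ := hx
      have hx0 : x ≠ 0 := hAne x hxA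
      refine ⟨hxA, ⟨(Units.mk0 a ha0)⁻¹ * Units.mk0 x hx0, ?_, by simp⟩⟩
      have heq : (QuotientGroup.mk (Units.mk0 a ha0) : Q) = QuotientGroup.mk (Units.mk0 x hx0) := by
        rw [← hφval a ha0, ← hφval x hx0, hat, hxt]
      exact QuotientGroup.eq.mp heq
    have hfin : ((A : Set (ZMod q)) ∩
        {x | ∃ u ∈ Ggen A, x = ((Units.mk0 a ha0 * u : (ZMod q)ˣ) : ZMod q)}).Finite :=
      Set.toFinite _
    have := Set.ncard_le_ncard hsub hfin
    rw [Set.ncard_coe_finset] at this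
    exact_mod_cast this
  · exfalso
    push_neg at hbig
    have hsmall : ∀ t : Q, 3 * (A.filter fun a => φ a = t).card < N := by
      intro t
      have h := hbig t
      have h3 : (3:ℝ) * ((A.filter fun a => φ a = t).card : ℝ) < (N : ℝ) := by linarith
      exact_mod_cast h3
    have htotal : ∑ t : Q, (A.filter fun a => φ a = t).card = N :=
      (Finset.card_eq_sum_card_fiberwise (fun a _ => Finset.mem_univ (φ a))).symm
    obtain ⟨S, hS1, hS2⟩ := split_lemma _ N htotal hsmall
    set B := A.filter (fun a => φ a ∈ S) with hBdef
    set C := A.filter (fun a => ¬ φ a ∈ S) with hCdef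
    have hBsub : B ⊆ A := Finset.filter_subset _ _
    have hCsub : C ⊆ A := Finset.filter_subset _ _
    have hBcard : B.card = ∑ t ∈ S, (A.filter fun a => φ a = t).card := by
      rw [Finset.card_eq_sum_card_fiberwise (f := φ) (s := B) (t := S)
        (fun a ha => (Finset.mem_filter.mp ha).2)]
      refine Finset.sum_congr rfl fun t htS => ?_
      congr 1
      ext x
      simp only [hBdef, Finset.mem_filter]
      constructor
      · rintro ⟨⟨h1, _⟩, h3⟩; exact ⟨h1, h3⟩
      · rintro ⟨h1, h2⟩; exact ⟨⟨h1, h2 ▸ htS⟩, h2⟩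
    have hBC : B.card + C.card = N := Finset.card_filter_add_card_filter_not _
    have hBl : (N : ℝ) ≤ 3 * B.card := by
      rw [hBcard]; exact_mod_cast hS1
    have hCl : (N : ℝ) ≤ 3 * C.card := by
      have h2 : (3 : ℝ) * B.card ≤ 2 * N := by rw [hBcard]; exact_mod_cast hS2
      have := hBC
      have hc : (B.card : ℝ) + C.card = N := by exact_mod_cast this
      linarith
    -- counting
    set D := B ×ˢ C with hDdef
    set m : ZMod q → ℕ := fun x => (D.filter fun p => p.1 * p.2 = x).card with hm
    set r : ZMod q → ℕ := fun s => (D.filter fun p => p.1 = s * p.2).card with hr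
    have hDcard : D.card = B.card * C.card := Finset.card_product _ _
    -- (1) sum of m over A*A
    have hsum_m : ∑ x ∈ A * A, m x = D.card := by
      symm
      apply Finset.card_eq_sum_card_fiberwise
      intro p hp
      rw [Finset.mem_coe, Finset.mem_product] at hp
      exact Finset.mul_mem_mul (hBsub hp.1) (hCsub hp.2)
    -- filter equality: ratio fibers equal r
    have hCne : ∀ p ∈ D, (p : ZMod q × ZMod q).2 ≠ 0 := by
      intro p hp
      rw [Finset.mem_product] at hp
      exact hAne _ (hCsub hp.2)
    have hfib_eq : ∀ s : ZMod q,
        (D.filter fun p => p.1 * p.2⁻¹ = s) = (D.filter fun p => p.1 = s * p.2) := by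
      intro s
      apply Finset.filter_congr
      intro p hp
      have h2 := hCne p hp
      rw [← div_eq_mul_inv, div_eq_iff h2]
    -- (2) energy identity
    have hE : ∑ x : ZMod q, (m x) ^ 2 = ∑ s : ZMod q, (r s) ^ 2 := by
      have e1 := fiber_sq_sum D (fun p => p.1 * p.2)
      have e2 := fiber_sq_sum D (fun p => p.1 * p.2⁻¹)
      have hswap := card_swap_energy B C
      have hpredeq : ((D ×ˢ D).filter fun p => p.1.1 * p.1.2⁻¹ = p.2.1 * p.2.2⁻¹)
          = ((D ×ˢ D).filter fun p => p.1.1 * p.2.2 = p.2.1 * p.1.2) := by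
        apply Finset.filter_congr
        intro p hp
        rw [Finset.mem_product] at hp
        have hb := hCne _ hp.1
        have hd := hCne _ hp.2
        rw [← div_eq_mul_inv, ← div_eq_mul_inv, div_eq_div_iff hb hd]
      have hr_eq : ∀ s : ZMod q, (D.filter fun p => p.1 * p.2⁻¹ = s).card = r s := by
        intro s; rw [hfib_eq s]
      calc ∑ x : ZMod q, (m x) ^ 2
          = ((D ×ˢ D).filter fun p => p.1.1 * p.1.2 = p.2.1 * p.2.2).card := e1.symm
        _ = ((D ×ˢ D).filter fun p => p.1.1 * p.2.2 = p.2.1 * p.1.2).card := hswap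
        _ = ((D ×ˢ D).filter fun p => p.1.1 * p.1.2⁻¹ = p.2.1 * p.2.2⁻¹).card := by
            rw [hpredeq]
        _ = ∑ s : ZMod q, ((D.filter fun p => p.1 * p.2⁻¹ = s).card) ^ 2 := e2
        _ = ∑ s : ZMod q, (r s) ^ 2 := by
            refine Finset.sum_congr rfl fun s _ => ?_
            rw [hr_eq s]
    -- (sum of r over univ)
    have hsum_r : ∑ s : ZMod q, r s = D.card := by
      have := Finset.card_eq_sum_card_fiberwise
        (f := fun p : ZMod q × ZMod q => p.1 * p.2⁻¹) (s := D) (t := Finset.univ)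
        (fun _ _ => Finset.mem_univ _)
      rw [this]
      refine Finset.sum_congr rfl fun s _ => ?_
      rw [hfib_eq s]
    -- (4) not in Hset
    set T : ℝ := (N : ℝ) ^ 2 / (5 * ((A * A).card : ℝ)) with hT
    have hAA : (0 : ℝ) < ((A * A).card : ℝ) := by
      have : (A * A).Nonempty := hA.mul hA
      exact_mod_cast Finset.card_pos.mpr this
    have hN0R : (0:ℝ) < (N:ℝ) := by exact_mod_cast hN1
    have hTpos : 0 < T := by
      rw [hT]
      apply div_pos (by nlinarith) (by linarith)
    have hrT : ∀ s : ZMod q, ((r s : ℝ)) ^ 2 ≤ T * r s := by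
      intro s
      rcases Nat.eq_zero_or_pos (r s) with h0 | hpos
      · rw [h0]; simp
      · -- find witness
        obtain ⟨p, hp⟩ := Finset.card_pos.mp hpos
        rw [Finset.mem_filter] at hp
        obtain ⟨hpD, hps⟩ := hp
        rw [Finset.mem_product] at hpD
        obtain ⟨hpB, hpC⟩ := hpD
        have hb0 : p.1 ≠ 0 := hAne _ (hBsub hpB)
        have hc0 : p.2 ≠ 0 := hAne _ (hCsub hpC)
        -- s ∉ Hset A
        have hsH : s ∉ Hset A := by
          intro hsmem
          -- s is a unit
          have hs0 : s ≠ 0 := by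
            intro h
            rw [h, zero_mul] at hps
            exact hb0 hps
          have hscoe : ((Units.mk0 p.1 hb0 * (Units.mk0 p.2 hc0)⁻¹ : (ZMod q)ˣ) : ZMod q) = s := by
            have h1 : ((Units.mk0 p.1 hb0 * (Units.mk0 p.2 hc0)⁻¹ : (ZMod q)ˣ) : ZMod q)
                = p.1 * p.2⁻¹ := by
              rw [Units.val_mul]
              congr 1
            rw [h1, hps, mul_assoc, mul_inv_cancel₀ hc0, mul_one]
          have huG : (Units.mk0 p.1 hb0 * (Units.mk0 p.2 hc0)⁻¹ : (ZMod q)ˣ) ∈ Ggen A := by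
            apply Subgroup.subset_closure
            rw [Set.mem_setOf_eq, hscoe]
            exact hsmem
          have hφeq : φ p.1 = φ p.2 := by
            rw [hφval _ hb0, hφval _ hc0]
            symm
            rw [QuotientGroup.eq]
            have : (Units.mk0 p.2 hc0)⁻¹ * Units.mk0 p.1 hb0
                = Units.mk0 p.1 hb0 * (Units.mk0 p.2 hc0)⁻¹ := mul_comm _ _
            rw [this]
            exact huG
          have h1 : φ p.1 ∈ S := (Finset.mem_filter.mp hpB).2
          have h2 : φ p.2 ∉ S := (Finset.mem_filter.mp hpC).2
          exact h2 (hφeq ▸ h1)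
        -- bound
        have hlt : ((((A ×ˢ A).filter fun p => p.1 = s * p.2).card : ℝ)) < T := by
          rw [Hset, Set.mem_setOf_eq, not_le] at hsH
          exact hsH
        have hle : r s ≤ ((A ×ˢ A).filter fun p => p.1 = s * p.2).card := by
          apply Finset.card_le_card
          exact Finset.filter_subset_filter _ (Finset.product_subset_product hBsub hCsub)
        have hle' : (r s : ℝ) ≤ T := le_of_lt (lt_of_le_of_lt (by exact_mod_cast hle) hlt)
        have : (r s : ℝ) ^ 2 = (r s : ℝ) * (r s : ℝ) := sq ((r s : ℝ))
        rw [this]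
        exact mul_le_mul_of_nonneg_right hle' (by positivity)
    -- Cauchy-Schwarz
    have hCS : ((D.card : ℝ)) ^ 2 ≤ ((A * A).card : ℝ) * ∑ s : ZMod q, ((r s : ℝ)) ^ 2 := by
      have h1 : ((D.card : ℝ)) = ∑ x ∈ A * A, ((m x : ℝ)) := by
        rw [← hsum_m]; push_cast; ring
      rw [h1]
      calc (∑ x ∈ A * A, ((m x : ℝ))) ^ 2
          ≤ ((A * A).card : ℝ) * ∑ x ∈ A * A, ((m x : ℝ)) ^ 2 :=
            sq_sum_le_card_mul_sum_sq
        _ ≤ ((A * A).card : ℝ) * ∑ x : ZMod q, ((m x : ℝ)) ^ 2 := by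
            apply mul_le_mul_of_nonneg_left _ (le_of_lt hAA)
            apply Finset.sum_le_sum_of_subset_of_nonneg (Finset.subset_univ _)
            intro i _ _
            positivity
        _ = ((A * A).card : ℝ) * ∑ s : ZMod q, ((r s : ℝ)) ^ 2 := by
            congr 1
            exact_mod_cast hE
    have hEbound : ∑ s : ZMod q, ((r s : ℝ)) ^ 2 ≤ T * D.card := by
      calc ∑ s : ZMod q, ((r s : ℝ)) ^ 2 ≤ ∑ s : ZMod q, T * (r s : ℝ) :=
            Finset.sum_le_sum (fun s _ => hrT s)
        _ = T * ∑ s : ZMod q, ((r s : ℝ)) := by rw [Finset.mul_sum]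
        _ = T * D.card := by
            congr 1
            exact_mod_cast hsum_r
    have hDpos : 0 < D.card := by
      rw [hDcard]
      have hB1 : 0 < B.card := by
        by_contra h
        push_neg at h
        have : B.card = 0 := by omega
        rw [this] at hBl
        simp at hBl
        have : (0:ℝ) < N := by exact_mod_cast hN1
        linarith
      have hC1 : 0 < C.card := by
        by_contra h
        push_neg at h
        have : C.card = 0 := by omega
        rw [this] at hCl
        simp at hCl
        have : (0:ℝ) < N := by exact_mod_cast hN1
        linarith
      exact Nat.mul_pos hB1 hC1
    have hDposR : (0:ℝ) < D.card := by exact_mod_cast hDpos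
    -- combine
    have hfinal : (D.card : ℝ) ≤ (N : ℝ) ^ 2 / 5 := by
      have h1 : ((D.card : ℝ)) ^ 2 ≤ ((A * A).card : ℝ) * (T * D.card) :=
        le_trans hCS (mul_le_mul_of_nonneg_left hEbound (le_of_lt hAA))
      have h2 : ((A * A).card : ℝ) * T = (N : ℝ) ^ 2 / 5 := by
        rw [hT]
        field_simp
      have h3 : ((D.card : ℝ)) ^ 2 ≤ ((N : ℝ) ^ 2 / 5) * D.card := by
        rw [← h2]; linarith [h1]
      have := mul_le_mul_of_nonneg_right (le_refl ((N : ℝ) ^ 2 / 5)) (le_of_lt hDposR)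
      nlinarith [hDposR]
    -- contradiction
    have hb : (N : ℝ) ≤ 3 * B.card := hBl
    have hc : (N : ℝ) ≤ 3 * C.card := hCl
    have hbc : (B.card : ℝ) + C.card = N := by exact_mod_cast hBC
    have hD' : (D.card : ℝ) = (B.card : ℝ) * C.card := by
      rw [hDcard]; push_cast; ring
    have hNR : (1:ℝ) ≤ N := by exact_mod_cast hN1
    rw [hD'] at hfinal
    nlinarith [mul_nonneg (sub_nonneg.mpr hb) (sub_nonneg.mpr hc), hfinal, hNR,
      mul_pos (lt_of_lt_of_le zero_lt_one hNR) (lt_of_lt_of_le zero_lt_one hNR)]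
end

section
/- Let q be a prime, F = ℤ/qℤ, and let A be a subset of F* = F \ {0} with |A| > 1. Define H := {s ∈ F : the number of pairs (a,b) ∈ A×A with s = a/b is at least |A|²/(5|A·A|)}, and let G be the multiplicative subgroup of F* generated by H. Then there exists ξ ∈ G such that min(|A|³/(5|A·A|), |A|²|G|/(|A|² + |G|)) ≤ |S_ξ(A)| < |A|². -/
open scoped Pointwise
open Finset

namespace KonyaginAux

variable {q : ℕ}

/-- Injectivity of the direction map. -/
def GoodDir (A : Finset (ZMod q)) (ξ : ZMod q) : Prop :=
  Set.InjOn (fun p : ZMod q × ZMod q => p.1 + p.2 * ξ) ↑(A ×ˢ A)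

lemma card_Sset_le (A : Finset (ZMod q)) (ξ : ZMod q) :
    (Sset A ξ).card ≤ A.card ^ 2 := by
  calc (Sset A ξ).card ≤ (A ×ˢ A).card := Finset.card_image_le
  _ = A.card ^ 2 := by rw [Finset.card_product, sq]

lemma card_Sset_of_good {A : Finset (ZMod q)} {ξ : ZMod q} (h : GoodDir A ξ) :
    (Sset A ξ).card = A.card ^ 2 := by
  rw [Sset, Finset.card_image_of_injOn h, Finset.card_product, sq]

lemma good_of_card {A : Finset (ZMod q)} {ξ : ZMod q}
    (h : (Sset A ξ).card = A.card ^ 2) : GoodDir A ξ := by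
  apply Finset.injOn_of_card_image_eq
  rw [Finset.card_product, ← sq]; exact h

lemma card_Sset_lt_of_not_good {A : Finset (ZMod q)} {ξ : ZMod q} (h : ¬ GoodDir A ξ) :
    (Sset A ξ).card < A.card ^ 2 :=
  lt_of_le_of_ne (card_Sset_le A ξ) (fun he => h (good_of_card he))

lemma not_good_one {A : Finset (ZMod q)} (hA1 : 1 < A.card) : ¬ GoodDir A 1 := by
  obtain ⟨a, ha, b, hb, hab⟩ := Finset.one_lt_card.mp hA1
  intro h
  have h1 : ((a, b) : ZMod q × ZMod q) ∈ (↑(A ×ˢ A) : Set _) := by simp [ha, hb]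
  have h2 : ((b, a) : ZMod q × ZMod q) ∈ (↑(A ×ˢ A) : Set _) := by simp [ha, hb]
  have := h h1 h2 (by simp [add_comm])
  simp at this
  exact hab this.1

/-- The energy: collisions including diagonal. -/
def Edir (A : Finset (ZMod q)) (ξ : ZMod q) : ℕ :=
  (((A ×ˢ A) ×ˢ (A ×ˢ A)).filter fun pp =>
    pp.1.1 + pp.1.2 * ξ = pp.2.1 + pp.2.2 * ξ).card

/-- Off-diagonal collisions. -/
def Ndir (A : Finset (ZMod q)) (ξ : ZMod q) : ℕ :=
  (((A ×ˢ A) ×ˢ (A ×ˢ A)).filter fun pp =>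
    (pp.1.1 + pp.1.2 * ξ = pp.2.1 + pp.2.2 * ξ) ∧ pp.1 ≠ pp.2).card

lemma cs_ineq (A : Finset (ZMod q)) (ξ : ZMod q) :
    ((A.card : ℝ) ^ 2) ^ 2 ≤ ((Sset A ξ).card : ℝ) * (Edir A ξ : ℝ) := by
  classical
  set D := A ×ˢ A with hD
  set f : ZMod q × ZMod q → ZMod q := fun p => p.1 + p.2 * ξ with hf
  set c : ZMod q → ℕ := fun v => (D.filter fun p => f p = v).card with hc
  have h1 : D.card = ∑ v ∈ Sset A ξ, c v :=
    Finset.card_eq_sum_card_fiberwise (fun x hx => Finset.mem_image_of_mem f hx)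
  have h2 : Edir A ξ = ∑ v ∈ Sset A ξ, (c v) ^ 2 := by
    have hbu : ((D ×ˢ D).filter fun pp => f pp.1 = f pp.2) =
        (Sset A ξ).biUnion (fun v => (D.filter fun p => f p = v) ×ˢ (D.filter fun p => f p = v)) := by
      ext pp
      constructor
      · intro h
        obtain ⟨hmem, heq⟩ := Finset.mem_filter.mp h
        obtain ⟨hm1, hm2⟩ := Finset.mem_product.mp hmem
        refine Finset.mem_biUnion.mpr ⟨f pp.1, Finset.mem_image_of_mem f hm1, ?_⟩
        exact Finset.mem_product.mpr ⟨Finset.mem_filter.mpr ⟨hm1, rfl⟩,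
          Finset.mem_filter.mpr ⟨hm2, heq.symm⟩⟩
      · intro h
        obtain ⟨v, _, hmem⟩ := Finset.mem_biUnion.mp h
        obtain ⟨hm1, hm2⟩ := Finset.mem_product.mp hmem
        obtain ⟨hd1, hv1⟩ := Finset.mem_filter.mp hm1
        obtain ⟨hd2, hv2⟩ := Finset.mem_filter.mp hm2
        exact Finset.mem_filter.mpr ⟨Finset.mem_product.mpr ⟨hd1, hd2⟩, by rw [hv1, hv2]⟩
    have hdisj : ∀ v₁ ∈ Sset A ξ, ∀ v₂ ∈ Sset A ξ, v₁ ≠ v₂ →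
        Disjoint ((D.filter fun p => f p = v₁) ×ˢ (D.filter fun p => f p = v₁))
          ((D.filter fun p => f p = v₂) ×ˢ (D.filter fun p => f p = v₂)) := by
      intro v₁ _ v₂ _ hne
      rw [Finset.disjoint_left]
      rintro pp h1' h2'
      rw [Finset.mem_product, Finset.mem_filter] at h1' h2'
      exact hne (h1'.1.2 ▸ h2'.1.2)
    have : Edir A ξ = ((D ×ˢ D).filter fun pp => f pp.1 = f pp.2).card := rfl
    rw [this, hbu, Finset.card_biUnion hdisj]
    refine Finset.sum_congr rfl fun v _ => ?_
    rw [Finset.card_product, sq]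
  have hDcard : D.card = A.card ^ 2 := by rw [hD, Finset.card_product, sq]
  have key : (∑ v ∈ Sset A ξ, (c v : ℝ)) ^ 2 ≤
      ((Sset A ξ).card : ℝ) * ∑ v ∈ Sset A ξ, (c v : ℝ) ^ 2 :=
    sq_sum_le_card_mul_sum_sq
  calc ((A.card : ℝ) ^ 2) ^ 2 = (∑ v ∈ Sset A ξ, (c v : ℝ)) ^ 2 := by
        rw [← Nat.cast_sum, ← h1, hDcard]; push_cast; ring
  _ ≤ ((Sset A ξ).card : ℝ) * ∑ v ∈ Sset A ξ, (c v : ℝ) ^ 2 := key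
  _ = ((Sset A ξ).card : ℝ) * (Edir A ξ : ℝ) := by rw [h2]; push_cast; ring

lemma Edir_eq (A : Finset (ZMod q)) (ξ : ZMod q) :
    Edir A ξ = A.card ^ 2 + Ndir A ξ := by
  classical
  set D := A ×ˢ A with hD
  have hsplit := Finset.card_filter_add_card_filter_not
    (s := (D ×ˢ D).filter fun pp => pp.1.1 + pp.1.2 * ξ = pp.2.1 + pp.2.2 * ξ)
    (p := fun pp => pp.1 = pp.2)
  rw [Finset.filter_filter, Finset.filter_filter] at hsplit
  have hdiag : ((D ×ˢ D).filter fun pp =>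
      (pp.1.1 + pp.1.2 * ξ = pp.2.1 + pp.2.2 * ξ) ∧ pp.1 = pp.2) = D.image (fun p => (p, p)) := by
    ext pp
    simp only [Finset.mem_filter, Finset.mem_product, Finset.mem_image]
    constructor
    · rintro ⟨⟨hm, _⟩, _, hpp⟩
      exact ⟨pp.1, hm, Prod.ext rfl hpp⟩
    · rintro ⟨p, hp, rfl⟩
      exact ⟨⟨hp, hp⟩, rfl, rfl⟩
  have hdiagcard : (D.image (fun p => (p, p))).card = A.card ^ 2 := by
    rw [Finset.card_image_of_injective _ (fun a b h => (Prod.mk.injEq _ _ _ _ ▸ h).1), hD,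
      Finset.card_product, sq]
  rw [Edir, ← hsplit, Ndir]
  congr 1
  rw [hdiag, hdiagcard]

lemma sum_Ndir_le [Fact q.Prime] (A : Finset (ZMod q)) (Gf : Finset (ZMod q)ˣ) :
    ∑ η ∈ Gf, Ndir A (η : ZMod q) ≤ A.card ^ 4 := by
  classical
  set D := A ×ˢ A with hD
  have hdisj : ∀ η₁ ∈ Gf, ∀ η₂ ∈ Gf, η₁ ≠ η₂ →
      Disjoint ((D ×ˢ D).filter fun pp =>
          (pp.1.1 + pp.1.2 * (η₁ : ZMod q) = pp.2.1 + pp.2.2 * (η₁ : ZMod q)) ∧ pp.1 ≠ pp.2)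
        ((D ×ˢ D).filter fun pp =>
          (pp.1.1 + pp.1.2 * (η₂ : ZMod q) = pp.2.1 + pp.2.2 * (η₂ : ZMod q)) ∧ pp.1 ≠ pp.2) := by
    intro η₁ _ η₂ _ hne
    rw [Finset.disjoint_left]
    rintro ⟨⟨a, b⟩, ⟨a', b'⟩⟩ h1 h2
    rw [Finset.mem_filter] at h1 h2
    obtain ⟨_, e1, hne1⟩ := h1
    obtain ⟨_, e2, _⟩ := h2
    simp only at e1 e2
    have hb : (b' - b) * ((η₁ : ZMod q) - (η₂ : ZMod q)) = 0 := by linear_combination e2 - e1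
    rcases mul_eq_zero.mp hb with h | h
    · have hbb : b' = b := by linear_combination h
      apply hne1
      have : a = a' := by rw [hbb] at e1; linear_combination e1
      simp [this, hbb]
    · have : (η₁ : ZMod q) = η₂ := by linear_combination h
      exact hne (Units.ext this)
  calc ∑ η ∈ Gf, Ndir A (η : ZMod q)
      = (Gf.biUnion fun η => (D ×ˢ D).filter fun pp =>
          (pp.1.1 + pp.1.2 * (η : ZMod q) = pp.2.1 + pp.2.2 * (η : ZMod q)) ∧ pp.1 ≠ pp.2).card :=
        (Finset.card_biUnion hdisj).symm
  _ ≤ (D ×ˢ D).card := Finset.card_le_card (by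
        intro pp hpp
        rw [Finset.mem_biUnion] at hpp
        obtain ⟨η, _, hmem⟩ := hpp
        exact (Finset.mem_filter.mp hmem).1)
  _ = A.card ^ 4 := by rw [Finset.card_product, hD, Finset.card_product]; ring

section Prop'
variable [Fact q.Prime]

lemma prop_mul {A : Finset (ZMod q)} {s ζ : ZMod q} (hs0 : s ≠ 0)
    (hinj : GoodDir A ζ) :
    A.card * ((A ×ˢ A).filter fun p => p.1 = s * p.2).card ≤ (Sset A (s * ζ)).card := by
  classical
  set Ps := (A ×ˢ A).filter (fun p => p.1 = s * p.2) with hPs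
  set g : ZMod q × (ZMod q × ZMod q) → ZMod q := fun x => x.1 + x.2.2 * (s * ζ) with hg
  have hmem : ∀ x : ZMod q × (ZMod q × ZMod q), x ∈ A ×ˢ Ps →
      x.1 ∈ A ∧ x.2.1 ∈ A ∧ x.2.2 ∈ A ∧ x.2.1 = s * x.2.2 := by
    intro x hx
    obtain ⟨h1, h2⟩ := Finset.mem_product.mp hx
    obtain ⟨h3, h4⟩ := Finset.mem_filter.mp h2
    obtain ⟨h5, h6⟩ := Finset.mem_product.mp h3
    exact ⟨h1, h5, h6, h4⟩
  have hval : ∀ x : ZMod q × (ZMod q × ZMod q), x ∈ A ×ˢ Ps →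
      g x = x.1 + x.2.1 * ζ := by
    intro x hx
    obtain ⟨_, _, _, h4⟩ := hmem x hx
    rw [hg]; simp only; rw [h4]; ring
  have hinj' : Set.InjOn g ↑(A ×ˢ Ps) := by
    intro x hx y hy he
    have hx' := hmem x (Finset.mem_coe.mp hx)
    have hy' := hmem y (Finset.mem_coe.mp hy)
    rw [hval x (Finset.mem_coe.mp hx), hval y (Finset.mem_coe.mp hy)] at he
    have h12 : ((x.1, x.2.1) : ZMod q × ZMod q) ∈ (↑(A ×ˢ A) : Set _) := by
      simp [hx'.1, hx'.2.1]
    have h34 : ((y.1, y.2.1) : ZMod q × ZMod q) ∈ (↑(A ×ˢ A) : Set _) := by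
      simp [hy'.1, hy'.2.1]
    have := hinj h12 h34 he
    rw [Prod.ext_iff] at this
    obtain ⟨e1, e2⟩ := this
    simp only at e1 e2
    have e3 : x.2.2 = y.2.2 := by
      have := hx'.2.2.2.symm.trans (e2 ▸ hy'.2.2.2)
      exact mul_left_cancel₀ hs0 this
    exact Prod.ext e1 (Prod.ext e2 e3)
  have himg : (A ×ˢ Ps).image g ⊆ Sset A (s * ζ) := by
    intro v hv
    obtain ⟨x, hx, rfl⟩ := Finset.mem_image.mp hv
    obtain ⟨h1, _, h3, _⟩ := hmem x hx
    exact Finset.mem_image.mpr ⟨(x.1, x.2.2), Finset.mem_product.mpr ⟨h1, h3⟩, rfl⟩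
  calc A.card * Ps.card = (A ×ˢ Ps).card := (Finset.card_product _ _).symm
  _ = ((A ×ˢ Ps).image g).card := (Finset.card_image_of_injOn hinj').symm
  _ ≤ (Sset A (s * ζ)).card := Finset.card_le_card himg

lemma prop_inv {A : Finset (ZMod q)} {s ζ : ZMod q} (hs0 : s ≠ 0)
    (hinj : GoodDir A ζ) :
    A.card * ((A ×ˢ A).filter fun p => p.1 = s * p.2).card ≤ (Sset A (s⁻¹ * ζ)).card := by
  classical
  set Ps := (A ×ˢ A).filter (fun p => p.1 = s * p.2) with hPs
  set g : ZMod q × (ZMod q × ZMod q) → ZMod q := fun x => x.1 + x.2.1 * (s⁻¹ * ζ) with hg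
  have hmem : ∀ x : ZMod q × (ZMod q × ZMod q), x ∈ A ×ˢ Ps →
      x.1 ∈ A ∧ x.2.1 ∈ A ∧ x.2.2 ∈ A ∧ x.2.1 = s * x.2.2 := by
    intro x hx
    obtain ⟨h1, h2⟩ := Finset.mem_product.mp hx
    obtain ⟨h3, h4⟩ := Finset.mem_filter.mp h2
    obtain ⟨h5, h6⟩ := Finset.mem_product.mp h3
    exact ⟨h1, h5, h6, h4⟩
  have hval : ∀ x : ZMod q × (ZMod q × ZMod q), x ∈ A ×ˢ Ps →
      g x = x.1 + x.2.2 * ζ := by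
    intro x hx
    obtain ⟨_, _, _, h4⟩ := hmem x hx
    rw [hg]; simp only; rw [h4]
    field_simp
  have hinj' : Set.InjOn g ↑(A ×ˢ Ps) := by
    intro x hx y hy he
    have hx' := hmem x (Finset.mem_coe.mp hx)
    have hy' := hmem y (Finset.mem_coe.mp hy)
    rw [hval x (Finset.mem_coe.mp hx), hval y (Finset.mem_coe.mp hy)] at he
    have h12 : ((x.1, x.2.2) : ZMod q × ZMod q) ∈ (↑(A ×ˢ A) : Set _) := by
      simp [hx'.1, hx'.2.2.1]
    have h34 : ((y.1, y.2.2) : ZMod q × ZMod q) ∈ (↑(A ×ˢ A) : Set _) := by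
      simp [hy'.1, hy'.2.2.1]
    have := hinj h12 h34 he
    rw [Prod.ext_iff] at this
    obtain ⟨e1, e2⟩ := this
    simp only at e1 e2
    have e3 : x.2.1 = y.2.1 := by rw [hx'.2.2.2, hy'.2.2.2, e2]
    exact Prod.ext e1 (Prod.ext e3 e2)
  have himg : (A ×ˢ Ps).image g ⊆ Sset A (s⁻¹ * ζ) := by
    intro v hv
    obtain ⟨x, hx, rfl⟩ := Finset.mem_image.mp hv
    obtain ⟨h1, h2, _, _⟩ := hmem x hx
    exact Finset.mem_image.mpr ⟨(x.1, x.2.1), Finset.mem_product.mpr ⟨h1, h2⟩, rfl⟩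
  calc A.card * Ps.card = (A ×ˢ Ps).card := (Finset.card_product _ _).symm
  _ = ((A ×ˢ Ps).image g).card := (Finset.card_image_of_injOn hinj').symm
  _ ≤ (Sset A (s⁻¹ * ζ)).card := Finset.card_le_card himg

end Prop'

end KonyaginAux

open KonyaginAux in
/-- **Lemma 4 (Konyagin).** Let `q` be prime and `A ⊆ F*` with `|A| > 1`. Then there
is `ξ ∈ G` with `min (|A|³/(5|A·A|), |A|²|G|/(|A|² + |G|)) ≤ |S_ξ(A)| < |A|²`. -/
theorem exists_xi_in_G_S_card_between (q : ℕ) (hq : q.Prime) (A : Finset (ZMod q))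
    (hA0 : (0 : ZMod q) ∉ A) (hA1 : 1 < A.card) :
    ∃ ξ : (ZMod q)ˣ, ξ ∈ Ggen A ∧
      min ((A.card : ℝ) ^ 3 / (5 * ((A * A).card : ℝ)))
          ((A.card : ℝ) ^ 2 * (Nat.card (Ggen A) : ℝ) /
            ((A.card : ℝ) ^ 2 + (Nat.card (Ggen A) : ℝ)))
        ≤ ((Sset A (ξ : ZMod q)).card : ℝ) ∧
      (Sset A (ξ : ZMod q)).card < A.card ^ 2 := by
  classical
  haveI : Fact q.Prime := ⟨hq⟩
  haveI : NeZero q := ⟨hq.ne_zero⟩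
  have hA : A.Nonempty := Finset.card_pos.mp (by omega)
  have hAA : (0 : ℝ) < ((A * A).card : ℝ) := by
    exact_mod_cast Finset.card_pos.mpr (hA.mul hA)
  have hApos : (0 : ℝ) < (A.card : ℝ) := by exact_mod_cast Nat.lt_of_lt_of_le Nat.zero_lt_one hA1.le
  -- the finset of G
  set Gf : Finset (ZMod q)ˣ := Finset.univ.filter (fun u => u ∈ Ggen A) with hGf
  have hGfmem : ∀ u : (ZMod q)ˣ, u ∈ Gf ↔ u ∈ Ggen A := by
    intro u; simp [hGf]
  have hcardG : Nat.card (Ggen A) = Gf.card := by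
    rw [Nat.card_eq_fintype_card]
    exact Fintype.card_of_subtype Gf hGfmem
  have h1G : (1 : (ZMod q)ˣ) ∈ Gf := (hGfmem 1).mpr (one_mem _)
  have hGfne : Gf.Nonempty := ⟨1, h1G⟩
  have hgpos : (0 : ℝ) < (Gf.card : ℝ) := by exact_mod_cast Finset.card_pos.mpr hGfne
  have hng1 : ¬ GoodDir A (1 : ZMod q) := not_good_one hA1
  -- the maximizer among non-injective directions in G
  set NI := Gf.filter (fun ξ : (ZMod q)ˣ => ¬ GoodDir A (ξ : ZMod q)) with hNI
  have hNIne : NI.Nonempty := ⟨1, Finset.mem_filter.mpr ⟨h1G, by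
    simpa using hng1⟩⟩
  obtain ⟨ξm, hξmem, hmax⟩ := NI.exists_max_image (fun ξ => (Sset A (ξ : ZMod q)).card) hNIne
  obtain ⟨hξGf, hξng⟩ := Finset.mem_filter.mp hξmem
  set M := (Sset A (ξm : ZMod q)).card with hM
  have hmax' : ∀ ξ : (ZMod q)ˣ, ξ ∈ Ggen A → ¬ GoodDir A (ξ : ZMod q) →
      (Sset A (ξ : ZMod q)).card ≤ M := by
    intro ξ h1 h2
    exact hmax ξ (Finset.mem_filter.mpr ⟨(hGfmem ξ).mpr h1, h2⟩)
  refine ⟨ξm, (hGfmem ξm).mp hξGf, ?_, card_Sset_lt_of_not_good hξng⟩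
  by_contra hcon
  push_neg at hcon
  rw [lt_min_iff] at hcon
  obtain ⟨hM1, hM2⟩ := hcon
  rw [hcardG] at hM2
  -- Step 1: find an injective direction η ∈ G
  obtain ⟨η, hηGf, hηmin⟩ := Gf.exists_min_image (fun η => Ndir A (η : ZMod q)) hGfne
  have hηG : η ∈ Ggen A := (hGfmem η).mp hηGf
  have hNsmall : Gf.card * Ndir A (η : ZMod q) ≤ A.card ^ 4 := by
    calc Gf.card * Ndir A (η : ZMod q)
        ≤ ∑ η' ∈ Gf, Ndir A (η' : ZMod q) := by
          simpa [smul_eq_mul] using Finset.card_nsmul_le_sum Gf _ _ (fun x hx => hηmin x hx)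
    _ ≤ A.card ^ 4 := sum_Ndir_le A Gf
  have hηgood : GoodDir A (η : ZMod q) := by
    by_contra hng
    have hle : (Sset A (η : ZMod q)).card ≤ M := hmax' η hηG hng
    -- B2 ≤ |S_η|
    have hcs := cs_ineq A (η : ZMod q)
    rw [Edir_eq] at hcs
    push_cast at hcs
    set Sc := ((Sset A (η : ZMod q)).card : ℝ) with hSc
    set a2 := ((A.card : ℝ) ^ 2) with ha2
    set N := ((Ndir A (η : ZMod q) : ℝ)) with hNr
    set g := ((Gf.card : ℝ)) with hgr
    have hcs' : a2 ^ 2 ≤ Sc * (a2 + N) := hcs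
    have hNg : g * N ≤ a2 ^ 2 := by
      rw [hgr, hNr, ha2]
      have := hNsmall
      push_cast
      calc (Gf.card : ℝ) * (Ndir A (η : ZMod q) : ℝ) = ((Gf.card * Ndir A (η:ZMod q) : ℕ) : ℝ) := by
            push_cast; ring
      _ ≤ ((A.card ^ 4 : ℕ) : ℝ) := by exact_mod_cast hNsmall
      _ = ((A.card : ℝ) ^ 2) ^ 2 := by push_cast; ring
    have hScnn : (0 : ℝ) ≤ Sc := by rw [hSc]; exact Nat.cast_nonneg _
    have hNnn : (0 : ℝ) ≤ N := by rw [hNr]; exact Nat.cast_nonneg _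
    have ha2pos : (0 : ℝ) < a2 := by rw [ha2]; exact pow_pos hApos 2
    have hB2 : a2 * g / (a2 + g) ≤ Sc := by
      rw [div_le_iff₀ (by exact add_pos ha2pos hgpos)]
      have key : a2 * (a2 * g) ≤ a2 * (Sc * (a2 + g)) := by
        calc a2 * (a2 * g) = a2 ^ 2 * g := by ring
        _ ≤ (Sc * (a2 + N)) * g := by nlinarith
        _ = Sc * (a2 * g) + Sc * (g * N) := by ring
        _ ≤ Sc * (a2 * g) + Sc * a2 ^ 2 := by nlinarith
        _ = a2 * (Sc * (a2 + g)) := by ring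
      exact le_of_mul_le_mul_left key ha2pos
    have : (M : ℝ) < Sc := lt_of_lt_of_le hM2 hB2
    have : Sc ≤ (M : ℝ) := by rw [hSc]; exact_mod_cast hle
    linarith
  -- Step 2: closure induction — all directions in G would be injective
  have key : ∀ g : (ZMod q)ˣ, g ∈ Ggen A →
      (∀ ζ : (ZMod q)ˣ, ζ ∈ Ggen A → GoodDir A (ζ : ZMod q) →
        GoodDir A ((g * ζ : (ZMod q)ˣ) : ZMod q)) ∧
      (∀ ζ : (ZMod q)ˣ, ζ ∈ Ggen A → GoodDir A (ζ : ZMod q) →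
        GoodDir A ((g⁻¹ * ζ : (ZMod q)ˣ) : ZMod q)) := by
    intro g hg
    induction hg using Subgroup.closure_induction with
    | mem s hs =>
      have hsG : s ∈ Ggen A := Subgroup.subset_closure hs
      have hs' : (s : ZMod q) ∈ Hset A := hs
      have hPs : (A.card : ℝ) ^ 2 / (5 * ((A * A).card : ℝ)) ≤
          (((A ×ˢ A).filter fun p => p.1 = (s : ZMod q) * p.2).card : ℝ) := hs'
      have hB1 : (A.card : ℝ) ^ 3 / (5 * ((A * A).card : ℝ)) ≤
          (A.card : ℝ) * (((A ×ˢ A).filter fun p => p.1 = (s : ZMod q) * p.2).card : ℝ) := by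
        calc (A.card : ℝ) ^ 3 / (5 * ((A * A).card : ℝ))
            = (A.card : ℝ) * ((A.card : ℝ) ^ 2 / (5 * ((A * A).card : ℝ))) := by
              field_simp
        _ ≤ _ := by
              apply mul_le_mul_of_nonneg_left hPs (le_of_lt hApos)
      constructor
      · intro ζ hζ hgood
        by_contra hng
        have hmem' : s * ζ ∈ Ggen A := mul_mem hsG hζ
        have hle := hmax' (s * ζ) hmem' hng
        have hprop := prop_mul (A := A) (Units.ne_zero s) hgood
        rw [← Units.val_mul] at hprop
        have : (A.card : ℝ) ^ 3 / (5 * ((A * A).card : ℝ)) ≤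
            ((Sset A ((s * ζ : (ZMod q)ˣ) : ZMod q)).card : ℝ) := by
          refine le_trans hB1 ?_
          calc (A.card : ℝ) * (((A ×ˢ A).filter fun p => p.1 = (s:ZMod q) * p.2).card : ℝ)
              = ((A.card * ((A ×ˢ A).filter fun p => p.1 = (s:ZMod q) * p.2).card : ℕ) : ℝ) := by
                push_cast; ring
          _ ≤ _ := by exact_mod_cast hprop
        have h1 : (M : ℝ) < ((Sset A ((s * ζ : (ZMod q)ˣ) : ZMod q)).card : ℝ) :=
          lt_of_lt_of_le hM1 this
        have h2 : ((Sset A ((s * ζ : (ZMod q)ˣ) : ZMod q)).card : ℝ) ≤ (M : ℝ) := by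
          exact_mod_cast hle
        linarith
      · intro ζ hζ hgood
        by_contra hng
        have hmem' : s⁻¹ * ζ ∈ Ggen A := mul_mem (inv_mem hsG) hζ
        have hle := hmax' (s⁻¹ * ζ) hmem' hng
        have hprop := prop_inv (A := A) (Units.ne_zero s) hgood
        have hcoe : ((s⁻¹ * ζ : (ZMod q)ˣ) : ZMod q) = ((s : ZMod q))⁻¹ * (ζ : ZMod q) := by
          rw [Units.val_mul]
          norm_cast
        rw [← hcoe] at hprop
        have : (A.card : ℝ) ^ 3 / (5 * ((A * A).card : ℝ)) ≤
            ((Sset A ((s⁻¹ * ζ : (ZMod q)ˣ) : ZMod q)).card : ℝ) := by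
          refine le_trans hB1 ?_
          calc (A.card : ℝ) * (((A ×ˢ A).filter fun p => p.1 = (s:ZMod q) * p.2).card : ℝ)
              = ((A.card * ((A ×ˢ A).filter fun p => p.1 = (s:ZMod q) * p.2).card : ℕ) : ℝ) := by
                push_cast; ring
          _ ≤ _ := by exact_mod_cast hprop
        have h1 : (M : ℝ) < ((Sset A ((s⁻¹ * ζ : (ZMod q)ˣ) : ZMod q)).card : ℝ) :=
          lt_of_lt_of_le hM1 this
        have h2 : ((Sset A ((s⁻¹ * ζ : (ZMod q)ˣ) : ZMod q)).card : ℝ) ≤ (M : ℝ) := by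
          exact_mod_cast hle
        linarith
    | one =>
      constructor
      · intro ζ hζ hgood; rw [one_mul]; exact hgood
      · intro ζ hζ hgood; rw [inv_one, one_mul]; exact hgood
    | mul x y hx hy ihx ihy =>
      constructor
      · intro ζ hζ hgood
        rw [mul_assoc]
        exact ihx.1 (y * ζ) (mul_mem hy hζ) (ihy.1 ζ hζ hgood)
      · intro ζ hζ hgood
        rw [mul_inv_rev, mul_assoc]
        exact ihy.2 (x⁻¹ * ζ) (mul_mem (inv_mem hx) hζ) (ihx.2 ζ hζ hgood)
    | inv x hx ihx =>
      constructor
      · intro ζ hζ hgood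
        exact ihx.2 ζ hζ hgood
      · intro ζ hζ hgood
        rw [inv_inv]
        exact ihx.1 ζ hζ hgood
  have hfin := (key η⁻¹ (inv_mem hηG)).1 η hηG hηgood
  rw [inv_mul_cancel] at hfin
  rw [Units.val_one] at hfin
  exact hng1 hfin
end

section
/- Let q be a prime, F = ℤ/qℤ, and let A be a subset of F* = F \ {0}. Define H := {s ∈ F : the number of pairs (a,b) ∈ A×A with s = a/b is at least |A|²/(5|A·A|)}. Suppose g ∈ F* is such that |S_g(A)| = |A|² (equivalently, the pairs sums a + bg with a,b ∈ A are pairwise distinct), and let h ∈ H. Then |S_{gh}(A)| ≥ |A|³/(5|A·A|). -/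
open scoped Pointwise

/-- **Step in Case 1 of Lemma 4 (Konyagin).** If `A ⊆ F*`, `g ∈ F*` satisfies
`|S_g(A)| = |A|²`, and `h ∈ H`, then `|S_{gh}(A)| ≥ |A|³/(5|A·A|)`. -/
theorem S_card_mul_mem_H_ge (q : ℕ) (hq : q.Prime) (A : Finset (ZMod q))
    (hA0 : (0 : ZMod q) ∉ A) (g : ZMod q) (hg : g ≠ 0)
    (hSg : (Sset A g).card = A.card ^ 2) (h : ZMod q) (hh : h ∈ Hset A) :
    (A.card : ℝ) ^ 3 / (5 * ((A * A).card : ℝ)) ≤ ((Sset A (g * h)).card : ℝ) := by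
  haveI := Fact.mk hq
  rcases A.eq_empty_or_nonempty with rfl | hAne
  · simp
  set P := (A ×ˢ A).filter fun p => p.1 = h * p.2 with hP
  have hh' : (A.card : ℝ) ^ 2 / (5 * ((A * A).card : ℝ)) ≤ (P.card : ℝ) := hh
  have hAA : (0 : ℝ) < 5 * ((A * A).card : ℝ) := by
    have : (A * A).Nonempty := hAne.mul hAne
    positivity
  have hApos : (0 : ℝ) < (A.card : ℝ) := by
    exact_mod_cast Nat.pos_of_ne_zero (by simpa using hAne.card_ne_zero)
  have hh0 : h ≠ 0 := by
    rintro rfl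
    have : P = ∅ := by
      apply Finset.filter_false_of_mem
      rintro ⟨a, b⟩ hab
      simp only [Finset.mem_product] at hab
      intro heq
      rw [zero_mul] at heq
      exact hA0 (heq ▸ hab.1)
    rw [this] at hh'
    simp only [Finset.card_empty, Nat.cast_zero] at hh'
    have : (0 : ℝ) < (A.card : ℝ) ^ 2 / (5 * ((A * A).card : ℝ)) := by positivity
    linarith
  -- injectivity of the sum map for g
  have hinj : Set.InjOn (fun p : ZMod q × ZMod q => p.1 + p.2 * g) ↑(A ×ˢ A) := by
    rw [← Finset.card_image_iff]
    rw [show ((A ×ˢ A).image fun p => p.1 + p.2 * g) = Sset A g from rfl, hSg,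
      Finset.card_product, sq]
  -- main injection: A ×ˢ P → Sset A (g*h)
  have hcard : (A ×ˢ P).card ≤ (Sset A (g * h)).card := by
    apply Finset.card_le_card_of_injOn (fun p => p.1 + p.2.2 * (g * h))
    · rintro ⟨c, a, b⟩ hm
      simp only [Finset.mem_coe, Finset.mem_product, hP, Finset.mem_filter] at hm
      exact Finset.mem_image.2 ⟨(c, b), Finset.mem_product.2 ⟨hm.1, hm.2.1.2⟩, rfl⟩
    · rintro ⟨c, a, b⟩ hm ⟨c', a', b'⟩ hm' heq
      simp only [Finset.mem_coe, Finset.mem_product, hP, Finset.mem_filter] at hm hm'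
      have hab : a = h * b := hm.2.2
      have hab' : a' = h * b' := hm'.2.2
      have heq2 : c + a * g = c' + a' * g := by
        simp only at heq
        rw [hab, hab']; ring_nf
        ring_nf at heq
        linear_combination heq
      have := @hinj (c, a) (Finset.mem_coe.2 (Finset.mem_product.2 ⟨hm.1, hm.2.1.1⟩))
        (c', a') (Finset.mem_coe.2 (Finset.mem_product.2 ⟨hm'.1, hm'.2.1.1⟩)) heq2
      obtain ⟨hc, ha⟩ := Prod.mk.injEq .. ▸ this
      have hb : b = b' := by
        have : h * b = h * b' := by rw [← hab, ← hab', ha]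
        exact mul_left_cancel₀ hh0 this
      simp_all
  have hcard' : (A.card : ℝ) * (P.card : ℝ) ≤ ((Sset A (g * h)).card : ℝ) := by
    have := hcard
    rw [Finset.card_product] at this
    exact_mod_cast this
  calc (A.card : ℝ) ^ 3 / (5 * ((A * A).card : ℝ))
      = (A.card : ℝ) * ((A.card : ℝ) ^ 2 / (5 * ((A * A).card : ℝ))) := by ring
    _ ≤ (A.card : ℝ) * (P.card : ℝ) := by
        exact mul_le_mul_of_nonneg_left hh' hApos.le
    _ ≤ _ := hcard'
end
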